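/- arXiv:1708.05585 — 7 statements merged into one kernel-verified Lean document; each statement's English description precedes it below -/
import Mathlib

section
/- Let f(z) = ∑_{k=0}^∞ a_k z^k be analytic on the open unit disk D with |f(z)| < 1 for all z ∈ D, and let N ≥ 1 be an integer. If 0 ≤ r < 1 satisfies 2(1+r)r^N ≤ (1-r)^2, then for every z ∈ ℂ with |z| = r one has |f(z)| + ∑_{k=N}^∞ |a_k| r^k ≤ 1. (In particular this holds for all r ≤ R_N, where R_N is the positive root of 2(1+r)r^N - (1-r)^2 = 0.) -/
/-!
Schwarz–Pick (the Schwarz lemma composed with the disk automorphism moving `f 0` to `0`) gives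
`|f z| ≤ (|a₀| + r) / (1 + |a₀| r) = 1 - (1 - |a₀|)(1 - r) / (1 + |a₀| r)`.
Carathéodory's inequality `|a_k| ≤ 2 (1 - |a₀|)` for `k ≥ 1` comes from integrating the
nonnegative function `1 - Re (c f)`, with `c a₀ = |a₀|`, against `exp (-k θ I)` on the circles
`|z| = ρ` and letting `ρ → 1`; it bounds the tail by `2 (1 - |a₀|) r^N / (1 - r)`.
Since `|a₀| ≤ 1`, the condition `2 (1 + r) r^N ≤ (1 - r)²` makes this tail fit into the gap
left by Schwarz–Pick.
-/
open Metric Complex Filter Topology MeasureTheory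
open scoped Real ComplexConjugate

theorem integral_exp_int_mul_I (n : ℤ) :
    ∫ θ in (0 : ℝ)..2 * π, exp (n * θ * I) = if n = 0 then (2 * π : ℂ) else 0 := by
  split_ifs with hn
  · simp [hn]
  · have hnI : (n : ℂ) * I ≠ 0 := mul_ne_zero (Int.cast_ne_zero.mpr hn) I_ne_zero
    simp_rw [mul_right_comm _ _ I]
    rw [integral_exp_mul_complex hnI]
    have : exp (n * I * (2 * π)) = 1 := by
      rw [← exp_int_mul_two_pi_mul_I n]; ring_nf
    simp [this]

theorem norm_exp_int_mul_I (j : ℤ) (θ : ℝ) : ‖exp (j * θ * I)‖ = 1 := by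
  simp [Complex.norm_exp]

theorem summable_norm_mul_norm_pow {a : ℕ → ℂ} {z : ℂ} (h : Summable fun m => a m * z ^ m) :
    Summable fun m => ‖a m‖ * ‖z‖ ^ m := by
  simpa [norm_mul, norm_pow] using summable_norm_iff.mpr h

section PowerSeriesOnCircle

variable {a : ℕ → ℂ} {f : ℂ → ℂ} {ρ : ℝ}

theorem continuous_comp_circleMap_of_hasSum
    (hsum : ∀ θ : ℝ, HasSum (fun m => a m * circleMap 0 ρ θ ^ m) (f (circleMap 0 ρ θ))) :
    Continuous fun θ => f (circleMap 0 ρ θ) := by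
  simp_rw [← fun θ => (hsum θ).tsum_eq]
  refine continuous_tsum (fun m => by fun_prop) (summable_norm_mul_norm_pow (hsum 0).summable)
    fun m θ => ?_
  simp [norm_circleMap_zero]

theorem hasSum_integral_comp_circleMap_mul_exp
    (hsum : ∀ θ : ℝ, HasSum (fun m => a m * circleMap 0 ρ θ ^ m) (f (circleMap 0 ρ θ)))
    (j : ℤ) :
    HasSum (fun m : ℕ => if (m : ℤ) + j = 0 then 2 * π * (a m * ρ ^ m) else 0)
      (∫ θ in (0 : ℝ)..2 * π, f (circleMap 0 ρ θ) * exp (j * θ * I)) := by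
  have hterm : ∀ m : ℕ, ∀ θ : ℝ, a m * circleMap 0 ρ θ ^ m * exp (j * θ * I) =
      a m * ρ ^ m * exp (((m + j : ℤ) : ℂ) * θ * I) := by
    intro m θ
    rw [circleMap_zero, mul_pow, ← Complex.exp_nat_mul]
    push_cast
    rw [add_mul, add_mul, Complex.exp_add]
    ring_nf
  have hintegral : ∀ m : ℕ, ∫ θ in (0 : ℝ)..2 * π, a m * circleMap 0 ρ θ ^ m * exp (j * θ * I) =
      if (m : ℤ) + j = 0 then 2 * π * (a m * ρ ^ m) else 0 := fun m => by
    simp_rw [hterm, intervalIntegral.integral_const_mul, integral_exp_int_mul_I]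
    split_ifs <;> ring
  simpa only [hintegral] using intervalIntegral.hasSum_integral_of_dominated_convergence
    (μ := volume) (a := 0) (b := 2 * π)
    (F := fun m θ => a m * circleMap 0 ρ θ ^ m * exp (j * θ * I))
    (fun m _ => ‖a m‖ * ‖circleMap 0 ρ 0‖ ^ m) (fun m => by fun_prop)
    (fun m => ae_of_all _ fun θ _ => by
      simp [norm_circleMap_zero, norm_exp_int_mul_I])
    (ae_of_all _ fun _ _ => summable_norm_mul_norm_pow (hsum 0).summable)
    intervalIntegrable_const
    (ae_of_all _ fun θ _ => (hsum θ).mul_right _)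

theorem integral_comp_circleMap_mul_exp
    (hsum : ∀ θ : ℝ, HasSum (fun m => a m * circleMap 0 ρ θ ^ m) (f (circleMap 0 ρ θ)))
    (j : ℤ) :
    ∫ θ in (0 : ℝ)..2 * π, f (circleMap 0 ρ θ) * exp (j * θ * I) =
      if j ≤ 0 then 2 * π * (a (-j).toNat * ρ ^ (-j).toNat) else 0 := by
  refine (hasSum_integral_comp_circleMap_mul_exp hsum j).unique ?_
  split_ifs with hj
  · convert hasSum_ite_eq (-j).toNat (2 * π * (a (-j).toNat * ρ ^ (-j).toNat)) using 2 with m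
    by_cases hm : (m : ℤ) + j = 0
    · rw [if_pos hm, if_pos (by omega), show m = (-j).toNat by omega]
    · rw [if_neg hm, if_neg (by omega)]
  · simpa only [show ∀ m : ℕ, ¬((m : ℤ) + j = 0) by omega, if_false] using hasSum_zero

theorem integral_re_comp_circleMap
    (hsum : ∀ θ : ℝ, HasSum (fun m => a m * circleMap 0 ρ θ ^ m) (f (circleMap 0 ρ θ))) :
    ∫ θ in (0 : ℝ)..2 * π, (f (circleMap 0 ρ θ)).re = 2 * π * (a 0).re := by
  have h := integral_comp_circleMap_mul_exp hsum 0
  simp only [Int.cast_zero, zero_mul, Complex.exp_zero, mul_one, le_refl, if_true, neg_zero,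
    Int.toNat_zero, pow_zero] at h
  have hre := intervalIntegral.intervalIntegral_re (μ := volume)
    ((continuous_comp_circleMap_of_hasSum hsum).intervalIntegrable 0 (2 * π))
  rw [h] at hre
  simpa using hre

theorem integral_re_comp_circleMap_mul_exp
    (hsum : ∀ θ : ℝ, HasSum (fun m => a m * circleMap 0 ρ θ ^ m) (f (circleMap 0 ρ θ)))
    {k : ℕ} (hk : 0 < k) :
    ∫ θ in (0 : ℝ)..2 * π, ((f (circleMap 0 ρ θ)).re : ℂ) * exp ((-k : ℤ) * θ * I) =
      π * (a k * ρ ^ k) := by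
  have hcont : ∀ j : ℤ, Continuous fun θ : ℝ => f (circleMap 0 ρ θ) * exp (j * θ * I) :=
    fun j => (continuous_comp_circleMap_of_hasSum hsum).mul (by fun_prop)
  have hpt : ∀ θ : ℝ, ((f (circleMap 0 ρ θ)).re : ℂ) * exp ((-k : ℤ) * θ * I) =
      f (circleMap 0 ρ θ) * exp ((-k : ℤ) * θ * I) / 2 +
        conj (f (circleMap 0 ρ θ) * exp ((k : ℤ) * θ * I)) / 2 := fun θ => by
    simp only [re_eq_add_conj, map_mul, ← exp_conj, conj_ofReal, conj_I, map_intCast]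
    push_cast
    ring_nf
  rw [intervalIntegral.integral_congr fun θ _ => hpt θ, intervalIntegral.integral_add,
    intervalIntegral.integral_div, intervalIntegral.integral_div,
    intervalIntegral.intervalIntegral_conj, integral_comp_circleMap_mul_exp hsum,
    integral_comp_circleMap_mul_exp hsum]
  · simp only [Left.neg_nonpos_iff, Nat.cast_nonneg, ↓reduceIte, neg_neg, Int.toNat_natCast,
      Int.natCast_nonpos_iff, hk.ne', map_zero, zero_div, add_zero]
    ring
  · exact ((hcont _).div_const 2).intervalIntegrable _ _
  · exact ((continuous_conj.comp (hcont _)).div_const 2).intervalIntegrable _ _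

theorem norm_coeff_mul_pow_le_of_re_le_one
    (hsum : ∀ θ : ℝ, HasSum (fun m => a m * circleMap 0 ρ θ ^ m) (f (circleMap 0 ρ θ)))
    (hre : ∀ θ : ℝ, (f (circleMap 0 ρ θ)).re ≤ 1) {k : ℕ} (hk : 0 < k) :
    ‖a k‖ * |ρ| ^ k ≤ 2 * (1 - (a 0).re) := by
  have hF : Continuous fun θ => f (circleMap 0 ρ θ) := continuous_comp_circleMap_of_hasSum hsum
  have hexp : Continuous fun θ : ℝ => exp ((-k : ℤ) * θ * I) := by fun_prop
  set g : ℝ → ℝ := fun θ => 1 - (f (circleMap 0 ρ θ)).re with hg_def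
  -- `1 - Re f` is nonnegative and, as `k ≠ 0`, has the same `k`-th Fourier coefficient as `-Re f`
  have hg_coeff : ∫ θ in (0 : ℝ)..2 * π, (g θ : ℂ) * exp ((-k : ℤ) * θ * I) =
      -(π * (a k * ρ ^ k)) := by
    simp only [hg_def, ofReal_sub, ofReal_one, sub_mul, one_mul]
    rw [intervalIntegral.integral_sub, integral_exp_int_mul_I,
      integral_re_comp_circleMap_mul_exp hsum hk]
    · simp [hk.ne']
    · exact hexp.intervalIntegrable _ _
    · exact ((continuous_ofReal.comp (continuous_re.comp hF)).mul hexp).intervalIntegrable _ _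
  have hnorm : ∀ θ : ℝ, ‖(g θ : ℂ) * exp ((-k : ℤ) * θ * I)‖ = g θ := fun θ => by
    rw [norm_mul, norm_real, Real.norm_of_nonneg (sub_nonneg.mpr (hre θ)), norm_exp_int_mul_I,
      mul_one]
  have hg_integral : ∫ θ in (0 : ℝ)..2 * π, g θ = 2 * π * (1 - (a 0).re) := by
    rw [intervalIntegral.integral_sub, integral_re_comp_circleMap hsum]
    · simp only [intervalIntegral.integral_const, sub_zero, smul_eq_mul, mul_one]
      ring
    · exact intervalIntegrable_const
    · exact (continuous_re.comp hF).intervalIntegrable _ _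
  have key : π * (‖a k‖ * |ρ| ^ k) ≤ π * (2 * (1 - (a 0).re)) := calc
    π * (‖a k‖ * |ρ| ^ k) = ‖∫ θ in (0 : ℝ)..2 * π, (g θ : ℂ) * exp ((-k : ℤ) * θ * I)‖ := by
      rw [hg_coeff]; simp [abs_of_pos Real.pi_pos]
    _ ≤ ∫ θ in (0 : ℝ)..2 * π, ‖(g θ : ℂ) * exp ((-k : ℤ) * θ * I)‖ :=
      intervalIntegral.norm_integral_le_integral_norm (by positivity)
    _ = π * (2 * (1 - (a 0).re)) := by simp_rw [hnorm, hg_integral]; ring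
  exact le_of_mul_le_mul_left key Real.pi_pos

end PowerSeriesOnCircle

section UnitDisk

variable {a : ℕ → ℂ} {f : ℂ → ℂ}

theorem norm_coeff_le_of_re_le_one
    (hsum : ∀ z ∈ ball (0 : ℂ) 1, HasSum (fun m => a m * z ^ m) (f z))
    (hre : ∀ z ∈ ball (0 : ℂ) 1, (f z).re ≤ 1) {k : ℕ} (hk : 0 < k) :
    ‖a k‖ ≤ 2 * (1 - (a 0).re) := by
  have hmem : ∀ {ρ : ℝ}, ρ ∈ Set.Ioo (0 : ℝ) 1 → ∀ θ : ℝ, circleMap 0 ρ θ ∈ ball (0 : ℂ) 1 :=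
    fun hρ θ => by simp [norm_circleMap_zero, abs_of_pos hρ.1, hρ.2]
  have hlim : Tendsto (fun ρ : ℝ => ‖a k‖ * |ρ| ^ k) (𝓝[<] 1) (𝓝 ‖a k‖) := by
    simpa using ((by fun_prop : Continuous fun ρ : ℝ => ‖a k‖ * |ρ| ^ k).tendsto 1).mono_left
      nhdsWithin_le_nhds
  refine le_of_tendsto hlim ?_
  filter_upwards [Ioo_mem_nhdsLT (zero_lt_one' ℝ)] with ρ hρ
  exact norm_coeff_mul_pow_le_of_re_le_one (fun θ => hsum _ (hmem hρ θ))
    (fun θ => hre _ (hmem hρ θ)) hk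

theorem norm_coeff_le_of_norm_le_one
    (hsum : ∀ z ∈ ball (0 : ℂ) 1, HasSum (fun m => a m * z ^ m) (f z))
    (hbound : ∀ z ∈ ball (0 : ℂ) 1, ‖f z‖ ≤ 1) {k : ℕ} (hk : 0 < k) :
    ‖a k‖ ≤ 2 * (1 - ‖a 0‖) := by
  -- rotate `f` so that its constant coefficient becomes `‖a 0‖ ≥ 0`
  set c : ℂ := exp (-(arg (a 0) : ℂ) * I) with hc
  have hc_norm : ‖c‖ = 1 := by rw [hc, ← ofReal_neg, norm_exp_ofReal_mul_I]
  have hc_a0 : c * a 0 = ‖a 0‖ := by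
    conv_lhs => rw [← norm_mul_exp_arg_mul_I (a 0)]
    rw [hc, mul_left_comm, ← Complex.exp_add]
    simp
  have h := norm_coeff_le_of_re_le_one (a := fun m => c * a m) (f := fun z => c * f z)
    (fun z hz => (hsum z hz).mul_left c |>.congr_fun fun m => by ring)
    (fun z hz => (re_le_norm _).trans (by rw [norm_mul, hc_norm, one_mul]; exact hbound z hz)) hk
  simpa [hc_norm, hc_a0] using h

end UnitDisk

theorem normSq_one_sub_conj_mul_sub_normSq_sub (w u : ℂ) :
    normSq (1 - conj w * u) - normSq (u - w) = (1 - normSq w) * (1 - normSq u) := by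
  simp only [normSq_apply, sub_re, sub_im, mul_re, mul_im, one_re, one_im, conj_re, conj_im]
  ring

theorem one_sub_conj_mul_ne_zero {w u : ℂ} (hw : ‖w‖ < 1) (hu : ‖u‖ < 1) :
    1 - conj w * u ≠ 0 := by
  intro h
  have hlt : ‖conj w * u‖ < 1 := by
    rw [norm_mul, norm_conj]
    nlinarith [norm_nonneg w, norm_nonneg u]
  rw [← sub_eq_zero.mp h, norm_one] at hlt
  exact lt_irrefl 1 hlt

theorem norm_sub_div_one_sub_conj_mul_lt_one {w u : ℂ} (hw : ‖w‖ < 1) (hu : ‖u‖ < 1) :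
    ‖(u - w) / (1 - conj w * u)‖ < 1 := by
  rw [norm_div, div_lt_one (norm_pos_iff.mpr (one_sub_conj_mul_ne_zero hw hu))]
  refine lt_of_pow_lt_pow_left₀ 2 (norm_nonneg _) ?_
  have h := normSq_one_sub_conj_mul_sub_normSq_sub w u
  simp only [← Complex.sq_norm] at h ⊢
  nlinarith [mul_pos (sub_pos.mpr (pow_lt_one₀ (norm_nonneg w) hw two_ne_zero))
    (sub_pos.mpr (pow_lt_one₀ (norm_nonneg u) hu two_ne_zero))]

theorem norm_mul_one_add_le_of_norm_sub_div_le {w u : ℂ} {r : ℝ} (hw : ‖w‖ < 1) (hu : ‖u‖ < 1)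
    (hr0 : 0 ≤ r) (hr1 : r ≤ 1) (h : ‖(u - w) / (1 - conj w * u)‖ ≤ r) :
    ‖u‖ * (1 + ‖w‖ * r) ≤ ‖w‖ + r := by
  have hD := norm_pos_iff.mpr (one_sub_conj_mul_ne_zero hw hu)
  rw [norm_div, div_le_iff₀ hD] at h
  have hD_ge : 1 - ‖w‖ * ‖u‖ ≤ ‖1 - conj w * u‖ := by
    simpa [norm_mul, norm_conj] using norm_sub_norm_le (1 : ℂ) (conj w * u)
  have hid := normSq_one_sub_conj_mul_sub_normSq_sub w u
  simp only [← Complex.sq_norm] at hid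
  have has : ‖w‖ * ‖u‖ < 1 := by nlinarith [norm_nonneg w, norm_nonneg u]
  have hr2 : 0 ≤ 1 - r ^ 2 := by nlinarith
  have hsq : (‖u‖ - ‖w‖) ^ 2 ≤ r ^ 2 * (1 - ‖w‖ * ‖u‖) ^ 2 := by
    nlinarith [mul_le_mul_of_nonneg_left (pow_le_pow_left₀ (by linarith) hD_ge 2) hr2,
      pow_le_pow_left₀ (norm_nonneg _) h 2]
  have hlin : ‖u‖ - ‖w‖ ≤ r * (1 - ‖w‖ * ‖u‖) :=
    (abs_le_of_sq_le_sq' (by rwa [mul_pow]) (mul_nonneg hr0 (by linarith))).2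
  linear_combination hlin

theorem norm_mul_one_add_le_of_mapsTo_ball {f : ℂ → ℂ} (hd : DifferentiableOn ℂ f (ball 0 1))
    (hmaps : Set.MapsTo f (ball 0 1) (ball 0 1)) {z : ℂ} (hz : ‖z‖ < 1) :
    ‖f z‖ * (1 + ‖f 0‖ * ‖z‖) ≤ ‖f 0‖ + ‖z‖ := by
  have hf : ∀ u ∈ ball (0 : ℂ) 1, ‖f u‖ < 1 := fun u hu => mem_ball_zero_iff.mp (hmaps hu)
  have hw := hf 0 (mem_ball_self one_pos)
  -- compose with the disk automorphism sending `f 0` to `0`, then apply the Schwarz lemma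
  set g : ℂ → ℂ := fun u => (f u - f 0) / (1 - conj (f 0) * f u)
  have hgd : DifferentiableOn ℂ g (ball 0 1) :=
    (hd.sub_const _).div ((differentiableOn_const _).sub ((differentiableOn_const _).mul hd))
      fun u hu => one_sub_conj_mul_ne_zero hw (hf u hu)
  have hgmaps : Set.MapsTo g (ball 0 1) (closedBall 0 1) := fun u hu =>
    mem_closedBall_zero_iff.mpr (norm_sub_div_one_sub_conj_mul_lt_one hw (hf u hu)).le
  exact norm_mul_one_add_le_of_norm_sub_div_le hw (hf z (mem_ball_zero_iff.mpr hz))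
    (norm_nonneg z) hz.le (Complex.norm_le_norm_of_mapsTo_ball hgd hgmaps (by simp [g]) hz)

theorem tsum_norm_mul_pow_add_le {E : Type*} [SeminormedAddCommGroup E] {a : ℕ → E} {B r : ℝ}
    {N : ℕ} (hB : ∀ k, N ≤ k → ‖a k‖ ≤ B) (hr0 : 0 ≤ r) (hr1 : r < 1) :
    ∑' k, ‖a (N + k)‖ * r ^ (N + k) ≤ B * r ^ N / (1 - r) := by
  have hle : ∀ k, ‖a (N + k)‖ * r ^ (N + k) ≤ B * r ^ N * r ^ k := fun k => by
    rw [pow_add, ← mul_assoc]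
    gcongr
    exact hB _ (Nat.le_add_right N k)
  have hgeom := (summable_geometric_of_lt_one hr0 hr1).mul_left (B * r ^ N)
  calc ∑' k, ‖a (N + k)‖ * r ^ (N + k)
      ≤ ∑' k, B * r ^ N * r ^ k :=
        (hgeom.of_nonneg_of_le (fun k => by positivity) hle).tsum_le_tsum hle hgeom
    _ = B * r ^ N / (1 - r) := by
      rw [tsum_mul_left, tsum_geometric_of_lt_one hr0 hr1, div_eq_mul_inv]

/-- Theorem 1, first part (Bohr–Rogosinski inequality): if `f` is analytic on the unit
disk with `|f| < 1` and `2(1+r)r^N ≤ (1-r)^2`, then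
`|f(z)| + ∑_{k=N}^∞ |a_k| r^k ≤ 1` for `|z| = r`. -/
theorem bohr_rogosinski_radius (f : ℂ → ℂ) (a : ℕ → ℂ)
    (hf : AnalyticOn ℂ f (ball (0:ℂ) 1))
    (hsum : ∀ z ∈ ball (0:ℂ) 1, HasSum (fun k : ℕ => a k * z ^ k) (f z))
    (hbound : ∀ z ∈ ball (0:ℂ) 1, ‖f z‖ < 1)
    (N : ℕ) (hN : 1 ≤ N)
    (r : ℝ) (hr0 : 0 ≤ r) (hr1 : r < 1)
    (hroot : 2 * (1 + r) * r ^ N ≤ (1 - r) ^ 2)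
    (z : ℂ) (hz : ‖z‖ = r) :
    ‖f z‖ + ∑' k : ℕ, ‖a (N + k)‖ * r ^ (N + k) ≤ 1 := by
  have h0 : (0 : ℂ) ∈ ball (0 : ℂ) 1 := mem_ball_self one_pos
  have ha0 : a 0 = f 0 := by
    have h := hasSum_single (f := fun m => a m * (0 : ℂ) ^ m) 0 fun m hm => by simp [hm]
    simpa using h.unique (hsum 0 h0)
  have hA1 : ‖a 0‖ < 1 := ha0 ▸ hbound 0 h0
  have hpick : ‖f z‖ * (1 + ‖a 0‖ * r) ≤ ‖a 0‖ + r := by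
    rw [ha0, ← hz]
    exact norm_mul_one_add_le_of_mapsTo_ball hf.differentiableOn
      (fun u hu => mem_ball_zero_iff.mpr (hbound u hu)) (hz ▸ hr1)
  have htail := tsum_norm_mul_pow_add_le (fun k hk => norm_coeff_le_of_norm_le_one hsum
    (fun u hu => (hbound u hu).le) (k := k) (by omega)) hr0 hr1 (N := N)
  have hpos : 0 < 1 + ‖a 0‖ * r := by positivity
  have hgap : ‖f z‖ ≤ 1 - (1 - ‖a 0‖) * (1 - r) / (1 + ‖a 0‖ * r) := by
    rw [le_sub_iff_add_le, ← le_sub_iff_add_le', div_le_iff₀ hpos]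
    linarith
  have hfit : 2 * (1 - ‖a 0‖) * r ^ N / (1 - r) ≤ (1 - ‖a 0‖) * (1 - r) / (1 + ‖a 0‖ * r) := by
    rw [div_le_div_iff₀ (by linarith) hpos]
    have : 2 * r ^ N * (1 + ‖a 0‖ * r) ≤ (1 - r) ^ 2 := by
      nlinarith [mul_le_mul_of_nonneg_left (mul_le_of_le_one_left hr0 hA1.le)
        (by positivity : (0 : ℝ) ≤ 2 * r ^ N)]
    nlinarith
  linarith
end

section
/- Let N ≥ 1 be an integer and let R_N be the positive root of 2(1+r)r^N - (1-r)^2 = 0. For every r with R_N < r < 1 there exists a function f analytic on the open unit disk D with |f(z)| < 1 on D (one may take f(z) = (a-z)/(1-az) with a ∈ [0,1) close enough to 1) and a point z with |z| = r such that |f(z)| + ∑_{k=N}^∞ |a_k| r^k > 1, where a_k are the Taylor coefficients of f. Hence the radius R_N in the Bohr–Rogosinski inequality is best possible. -/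
/-!
For `0 ≤ a < 1` the Möbius map `f_a z = (a - z) / (1 - a z)` has coefficients `a` and
`-(1 - a²) a^(k-1)` (`k ≥ 1`). At `z = -r` we get `|f_a(-r)| = (a + r) / (1 + a r)` and the tail
`∑_{k ≥ N} |a_k| r^k = (1 - a²) a^(N-1) r^N / (1 - a r)`; their sum exceeds `1` by
`(1 - a) / ((1 + a r)(1 - a r))` times `(1 + a) a^(N-1) r^N (1 + a r) - (1 - r)(1 - a r)`.
As `a → 1` this tends to `2(1 + r) r^N - (1 - r)²`, which is increasing in `r` and vanishes at
`R_N`, hence is positive for `r > R_N`.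
-/

open Metric

noncomputable def mobius (a : ℝ) (z : ℂ) : ℂ := (a - z) / (1 - a * z)

noncomputable def mobiusCoeff (a : ℝ) (k : ℕ) : ℂ :=
  if k = 0 then a else -(1 - a ^ 2) * a ^ (k - 1)

section Mobius

variable {a : ℝ} {z : ℂ}

lemma norm_ofReal_mul_lt_one (ha : |a| ≤ 1) (hz : ‖z‖ < 1) : ‖(a : ℂ) * z‖ < 1 := by
  rw [norm_mul, Complex.norm_real, Real.norm_eq_abs]
  nlinarith [norm_nonneg z, abs_nonneg a]

lemma one_sub_ofReal_mul_ne_zero (ha : |a| ≤ 1) (hz : ‖z‖ < 1) : 1 - (a : ℂ) * z ≠ 0 := by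
  intro h
  have := norm_ofReal_mul_lt_one ha hz
  rw [← sub_eq_zero.mp h, norm_one] at this
  exact lt_irrefl _ this

lemma analyticOn_mobius (ha : |a| ≤ 1) : AnalyticOn ℂ (mobius a) (ball 0 1) :=
  (analyticOn_const.sub analyticOn_id).div
    (analyticOn_const.sub (analyticOn_const.mul analyticOn_id))
    fun _ hz ↦ one_sub_ofReal_mul_ne_zero ha (mem_ball_zero_iff.mp hz)

lemma hasSum_mobiusCoeff_mul_pow (ha : |a| ≤ 1) (hz : ‖z‖ < 1) :
    HasSum (fun k ↦ mobiusCoeff a k * z ^ k) (mobius a z) := by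
  have htail : HasSum (fun k ↦ mobiusCoeff a (k + 1) * z ^ (k + 1))
      (-(1 - (a : ℂ) ^ 2) * z * (1 - a * z)⁻¹) := by
    have hgeom := (hasSum_geometric_of_norm_lt_one (norm_ofReal_mul_lt_one ha hz)).mul_left
      (-(1 - (a : ℂ) ^ 2) * z)
    refine hgeom.congr_fun fun k ↦ ?_
    simp only [mobiusCoeff, Nat.add_one_ne_zero, if_false, Nat.add_sub_cancel]
    ring
  convert HasSum.zero_add (f := fun k ↦ mobiusCoeff a k * z ^ k) htail using 1
  have := one_sub_ofReal_mul_ne_zero ha hz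
  simp only [mobius, mobiusCoeff, if_true, pow_zero, mul_one]
  field_simp
  ring

lemma normSq_one_sub_ofReal_mul_sub_normSq_sub (a : ℝ) (z : ℂ) :
    Complex.normSq (1 - a * z) - Complex.normSq (a - z) = (1 - a ^ 2) * (1 - Complex.normSq z) := by
  simp only [Complex.normSq_apply, Complex.sub_re, Complex.sub_im, Complex.mul_re, Complex.mul_im,
    Complex.one_re, Complex.one_im, Complex.ofReal_re, Complex.ofReal_im]
  ring

lemma norm_mobius_lt_one (ha : |a| < 1) (hz : ‖z‖ < 1) : ‖mobius a z‖ < 1 := by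
  have hden := one_sub_ofReal_mul_ne_zero ha.le hz
  rw [mobius, norm_div, div_lt_one (norm_pos_iff.mpr hden),
    ← sq_lt_sq₀ (norm_nonneg _) (norm_nonneg _), Complex.sq_norm, Complex.sq_norm, ← sub_pos,
    normSq_one_sub_ofReal_mul_sub_normSq_sub, ← Complex.sq_norm]
  have : a ^ 2 < 1 := by nlinarith [abs_nonneg a, sq_abs a]
  have : ‖z‖ ^ 2 < 1 := by nlinarith [norm_nonneg z]
  exact mul_pos (by linarith) (by linarith)

lemma norm_mobius_neg_ofReal {r : ℝ} (ha : 0 ≤ a) (hr : 0 ≤ r) :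
    ‖mobius a (-r)‖ = (a + r) / (1 + a * r) := by
  have : mobius a (-r) = ((a + r) / (1 + a * r) : ℝ) := by
    simp only [mobius]
    push_cast
    ring
  rw [this, Complex.norm_real, Real.norm_eq_abs, abs_of_nonneg (by positivity)]

lemma norm_mobiusCoeff {k : ℕ} (hk : k ≠ 0) (ha : |a| ≤ 1) :
    ‖mobiusCoeff a k‖ = (1 - a ^ 2) * |a| ^ (k - 1) := by
  have : 0 ≤ 1 - a ^ 2 := by nlinarith [abs_nonneg a, sq_abs a]
  rw [mobiusCoeff, if_neg hk, norm_mul, norm_neg, norm_pow, Complex.norm_real, Real.norm_eq_abs,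
    ← Complex.ofReal_one, ← Complex.ofReal_pow, ← Complex.ofReal_sub, Complex.norm_real,
    Real.norm_eq_abs, abs_of_nonneg this]

lemma tsum_norm_mobiusCoeff_mul_pow_tail {N : ℕ} {r : ℝ} (hN : N ≠ 0) (ha0 : 0 ≤ a)
    (ha1 : a ≤ 1) (hr : 0 ≤ r) (har : a * r < 1) :
    ∑' k, ‖mobiusCoeff a (N + k)‖ * r ^ (N + k)
      = (1 - a ^ 2) * a ^ (N - 1) * r ^ N / (1 - a * r) := by
  have hterm : ∀ k, ‖mobiusCoeff a (N + k)‖ * r ^ (N + k)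
      = (1 - a ^ 2) * a ^ (N - 1) * r ^ N * (a * r) ^ k := by
    intro k
    rw [norm_mobiusCoeff (by omega) (abs_le.mpr ⟨by linarith, ha1⟩), abs_of_nonneg ha0,
      show N + k - 1 = N - 1 + k by omega]
    ring
  rw [tsum_congr hterm, tsum_mul_left, tsum_geometric_of_lt_one (by positivity) har, div_eq_mul_inv]

end Mobius

lemma sq_one_sub_lt_of_root_lt {N : ℕ} {R r : ℝ} (hN : N ≠ 0) (hR : 0 ≤ R)
    (hroot : 2 * (1 + R) * R ^ N = (1 - R) ^ 2) (hrR : R < r) (hr1 : r < 1) :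
    (1 - r) ^ 2 < 2 * (1 + r) * r ^ N := by
  have := pow_lt_pow_left₀ hrR hR hN
  nlinarith [pow_nonneg hR N]

lemma exists_mem_Ioo_one_sub_mul_lt_of_sq_one_sub_lt {N : ℕ} {r : ℝ}
    (h : (1 - r) ^ 2 < 2 * (1 + r) * r ^ N) :
    ∃ a ∈ Set.Ioo (0 : ℝ) 1,
      (1 - r) * (1 - a * r) < (1 + a) * a ^ (N - 1) * r ^ N * (1 + a * r) := by
  have hcont : ContinuousAt
      (fun a : ℝ ↦ (1 + a) * a ^ (N - 1) * r ^ N * (1 + a * r) - (1 - r) * (1 - a * r)) 1 := by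
    fun_prop
  have hpos : 0 < (1 + 1) * (1 : ℝ) ^ (N - 1) * r ^ N * (1 + 1 * r) - (1 - r) * (1 - 1 * r) := by
    rw [one_pow]; linarith
  have := ((hcont.eventually (eventually_gt_nhds hpos)).filter_mono nhdsWithin_le_nhds).and
    (Ioo_mem_nhdsLT (zero_lt_one' ℝ))
  obtain ⟨a, hgap, ha⟩ := this.exists
  exact ⟨a, ha, sub_pos.mp hgap⟩

lemma one_lt_add_div_add_div_of_lt {N : ℕ} {a r : ℝ} (ha0 : 0 ≤ a) (ha1 : a < 1) (hr0 : 0 ≤ r)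
    (hr1 : r < 1)
    (h : (1 - r) * (1 - a * r) < (1 + a) * a ^ (N - 1) * r ^ N * (1 + a * r)) :
    1 < (a + r) / (1 + a * r) + (1 - a ^ 2) * a ^ (N - 1) * r ^ N / (1 - a * r) := by
  have har : a * r < 1 := by nlinarith
  rw [div_add_div _ _ (by positivity) (by linarith),
    one_lt_div (mul_pos (by positivity) (by linarith))]
  nlinarith [mul_lt_mul_of_pos_left h (sub_pos.mpr ha1)]

/-- Theorem 1, sharpness of the radius `R_N`: if `R` is the root in `(0,1)` of
`2(1+r)r^N = (1-r)^2`, then for every `r` with `R < r < 1` there is an analytic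
self-map of the disk violating the Bohr–Rogosinski inequality at radius `r`. -/
theorem bohr_rogosinski_radius_sharp (N : ℕ) (hN : 1 ≤ N)
    (R : ℝ) (hR : R ∈ Set.Ioo (0:ℝ) 1)
    (hroot : 2 * (1 + R) * R ^ N = (1 - R) ^ 2)
    (r : ℝ) (hrR : R < r) (hr1 : r < 1) :
    ∃ (f : ℂ → ℂ) (a : ℕ → ℂ),
      AnalyticOn ℂ f (ball (0:ℂ) 1) ∧
      (∀ z ∈ ball (0:ℂ) 1, HasSum (fun k : ℕ => a k * z ^ k) (f z)) ∧
      (∀ z ∈ ball (0:ℂ) 1, ‖f z‖ < 1) ∧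
      ∃ z : ℂ, ‖z‖ = r ∧
        1 < ‖f z‖ + ∑' k : ℕ, ‖a (N + k)‖ * r ^ (N + k) := by
  have hr0 : 0 < r := hR.1.trans hrR
  obtain ⟨a, ⟨ha0, ha1⟩, hgap⟩ := exists_mem_Ioo_one_sub_mul_lt_of_sq_one_sub_lt
    (sq_one_sub_lt_of_root_lt (by omega) hR.1.le hroot hrR hr1)
  have ha : |a| < 1 := abs_lt.mpr ⟨by linarith, ha1⟩
  refine ⟨mobius a, mobiusCoeff a, analyticOn_mobius ha.le,
    fun z hz ↦ hasSum_mobiusCoeff_mul_pow ha.le (mem_ball_zero_iff.mp hz),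
    fun z hz ↦ norm_mobius_lt_one ha (mem_ball_zero_iff.mp hz), -r, by simp [hr0.le], ?_⟩
  rw [norm_mobius_neg_ofReal ha0.le hr0.le,
    tsum_norm_mobiusCoeff_mul_pow_tail (by omega) ha0.le ha1.le hr0.le (by nlinarith)]
  exact one_lt_add_div_add_div_of_lt ha0.le ha1 hr0.le hr1 hgap
end

section
/- Let f(z) = ∑_{k=0}^∞ a_k z^k be analytic on the open unit disk D with |f(z)| ≤ 1 for all z ∈ D, and let m, N ≥ 1 be integers. If 0 ≤ r < 1 satisfies 2r^N(1+r^m) ≤ (1-r)(1-r^m), then for every z ∈ ℂ with |z| = r one has |f(z^m)| + ∑_{k=N}^∞ |a_k| r^k ≤ 1. (In particular this holds for all r ≤ R_{m,N}, where R_{m,N} is the positive root of 2r^N(1+r^m) - (1-r)(1-r^m) = 0.) -/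
/-!
By the Schwarz–Pick lemma, `f w` lies in the pseudo-hyperbolic disk of radius `‖w‖` about
`a 0 = f 0`, whence `‖f (z ^ m)‖ ≤ (‖a 0‖ + r ^ m) / (1 + ‖a 0‖ * r ^ m)`. For `k ≥ 1` the series
`∑ a (j * k) * w ^ j` is the average of `f` over the `k`-th roots of `w`, so it is again bounded
by `1`, and Schwarz–Pick at the origin applied to it gives Wiener's inequality
`‖a k‖ ≤ 1 - ‖a 0‖ ^ 2`; this bounds the tail by `(1 - ‖a 0‖ ^ 2) * r ^ N / (1 - r)`. The
hypothesis on `r` makes the sum of the two bounds at most `1`, uniformly in `‖a 0‖ ≤ 1`.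
-/

open Metric Filter Topology Set ComplexConjugate

theorem mul_one_add_mul_le_add_of_sq_sub_mul_le {x t ρ : ℝ} (ht0 : 0 ≤ t) (ht1 : t ≤ 1)
    (hρ0 : 0 ≤ ρ) (hρ1 : ρ < 1)
    (h : (x - t) ^ 2 * (1 - ρ ^ 2) ≤ ρ ^ 2 * ((1 - x ^ 2) * (1 - t ^ 2))) :
    x * (1 + t * ρ) ≤ t + ρ := by
  -- `h` says that `x` lies between the roots `(t - ρ) / (1 - t * ρ) ≤ (t + ρ) / (1 + t * ρ)`.
  have hquad : ((1 + t * ρ) * x - (t + ρ)) * ((1 - t * ρ) * x - (t - ρ)) ≤ 0 := by nlinarith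
  by_contra! hx
  have htρ : 0 < 1 - t * ρ := by nlinarith
  have hsecond : 0 < (1 - t * ρ) * x - (t - ρ) := by
    have := mul_lt_mul_of_pos_left hx htρ
    have : 0 ≤ ρ * (1 - t ^ 2) := mul_nonneg hρ0 (by nlinarith)
    nlinarith [mul_nonneg ht0 hρ0]
  nlinarith [mul_pos (sub_pos.2 hx) hsecond]

theorem IsPrimitiveRoot.sum_range_pow_pow {K : Type*} [Field K] {ζ : K} {k : ℕ}
    (hζ : IsPrimitiveRoot ζ k) (n : ℕ) :
    ∑ i ∈ Finset.range k, (ζ ^ n) ^ i = if k ∣ n then (k : K) else 0 := by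
  split_ifs with hdvd
  · simp [(hζ.pow_eq_one_iff_dvd n).2 hdvd]
  · rw [geom_sum_eq (fun h => hdvd ((hζ.pow_eq_one_iff_dvd n).1 h)), ← pow_mul, mul_comm,
      pow_mul, hζ.pow_eq_one, one_pow, sub_self, zero_div]

theorem hasSum_mul_pow_mul_of_isPrimitiveRoot {K : Type*} [Field K] [CharZero K]
    [TopologicalSpace K] [IsTopologicalRing K] {a : ℕ → K} {F : K → K} {k : ℕ} (hk : k ≠ 0)
    {ω z : K} (hω : IsPrimitiveRoot ω k)
    (h : ∀ i, HasSum (fun n => a n * (ω ^ i * z) ^ n) (F (ω ^ i * z))) :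
    HasSum (fun j => a (j * k) * z ^ (j * k))
      ((k : K)⁻¹ * ∑ i ∈ Finset.range k, F (ω ^ i * z)) := by
  have hfilter : HasSum (fun n => if k ∣ n then a n * z ^ n else 0)
      ((k : K)⁻¹ * ∑ i ∈ Finset.range k, F (ω ^ i * z)) := by
    refine ((hasSum_sum fun i _ => h i).mul_left (k : K)⁻¹).congr_fun fun n => ?_
    have : ∑ i ∈ Finset.range k, a n * (ω ^ i * z) ^ n
        = (∑ i ∈ Finset.range k, (ω ^ n) ^ i) * (a n * z ^ n) := by
      rw [Finset.sum_mul]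
      refine Finset.sum_congr rfl fun i _ => ?_
      ring
    rw [this, hω.sum_range_pow_pow]
    split_ifs <;> simp [hk]
  have hsupp : ∀ n ∉ range (· * k), (if k ∣ n then a n * z ^ n else 0) = 0 := fun n hn =>
    if_neg fun ⟨j, hj⟩ => hn ⟨j, by rw [hj, mul_comm]⟩
  simpa [Function.comp_def] using ((mul_left_injective₀ hk).hasSum_iff hsupp).2 hfilter

namespace Complex

theorem normSq_one_sub_conj_mul_sub_normSq_sub (a b : ℂ) :
    normSq (1 - conj b * a) - normSq (a - b) = (1 - normSq a) * (1 - normSq b) := by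
  simp only [normSq_apply, sub_re, sub_im, mul_re, mul_im, conj_re, conj_im, one_re, one_im]
  ring

theorem norm_sub_lt_norm_one_sub_conj_mul {a b : ℂ} (ha : ‖a‖ < 1) (hb : ‖b‖ < 1) :
    ‖a - b‖ < ‖1 - conj b * a‖ := by
  rw [← pow_lt_pow_iff_left₀ (norm_nonneg _) (norm_nonneg _) two_ne_zero, Complex.sq_norm,
    Complex.sq_norm, ← sub_pos, normSq_one_sub_conj_mul_sub_normSq_sub, ← Complex.sq_norm,
    ← Complex.sq_norm]
  have := pow_lt_one₀ (norm_nonneg a) ha two_ne_zero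
  have := pow_lt_one₀ (norm_nonneg b) hb two_ne_zero
  nlinarith

theorem schwarz_pick_of_mapsTo_ball {f : ℂ → ℂ} (hd : DifferentiableOn ℂ f (ball 0 1))
    (hf : MapsTo f (ball 0 1) (ball 0 1)) {w : ℂ} (hw : w ∈ ball 0 1) :
    ‖f w - f 0‖ ≤ ‖w‖ * ‖1 - conj (f 0) * f w‖ := by
  have h0 : (0 : ℂ) ∈ ball 0 1 := mem_ball_self one_pos
  have hlt : ∀ v ∈ ball (0 : ℂ) 1, ‖f v - f 0‖ < ‖1 - conj (f 0) * f v‖ := fun v hv =>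
    norm_sub_lt_norm_one_sub_conj_mul (mem_ball_zero_iff.1 (hf hv)) (mem_ball_zero_iff.1 (hf h0))
  have hden : ∀ v ∈ ball (0 : ℂ) 1, 1 - conj (f 0) * f v ≠ 0 := fun v hv =>
    norm_pos_iff.1 ((norm_nonneg _).trans_lt (hlt v hv))
  set g : ℂ → ℂ := fun v => (f v - f 0) / (1 - conj (f 0) * f v)
  have hgd : DifferentiableOn ℂ g (ball 0 1) :=
    (hd.sub_const _).div ((differentiableOn_const _).sub ((differentiableOn_const _).mul hd)) hden
  have hg : MapsTo g (ball 0 1) (closedBall 0 1) := fun v hv => by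
    rw [mem_closedBall_zero_iff, norm_div]
    exact div_le_one_of_le₀ (hlt v hv).le (norm_nonneg _)
  have hschwarz : ‖g w‖ ≤ ‖w‖ :=
    norm_le_norm_of_mapsTo_ball hgd hg (by simp [g]) (mem_ball_zero_iff.1 hw)
  calc ‖f w - f 0‖ = ‖g w‖ * ‖1 - conj (f 0) * f w‖ := by
        rw [← norm_mul, div_mul_cancel₀ _ (hden w hw)]
    _ ≤ ‖w‖ * ‖1 - conj (f 0) * f w‖ := by gcongr

theorem schwarz_pick_of_mapsTo_closedBall {f : ℂ → ℂ} (hd : DifferentiableOn ℂ f (ball 0 1))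
    (hf : MapsTo f (ball 0 1) (closedBall 0 1)) {w : ℂ} (hw : w ∈ ball 0 1) :
    ‖f w - f 0‖ ≤ ‖w‖ * ‖1 - conj (f 0) * f w‖ := by
  -- `s • f` maps into the open disk for `s < 1`; let `s → 1`.
  have hscaled : ∀ s ∈ Ico (0 : ℝ) 1,
      s * ‖f w - f 0‖ ≤ ‖w‖ * ‖1 - (s : ℂ) ^ 2 * (conj (f 0) * f w)‖ := by
    rintro s ⟨hs0, hs1⟩
    have hmaps : MapsTo (fun v => (s : ℂ) * f v) (ball 0 1) (ball 0 1) := fun v hv => by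
      rw [mem_ball_zero_iff, norm_mul, norm_real, Real.norm_of_nonneg hs0]
      exact (mul_le_of_le_one_right hs0 (mem_closedBall_zero_iff.1 (hf hv))).trans_lt hs1
    have := schwarz_pick_of_mapsTo_ball (hd.const_mul _) hmaps hw
    rwa [← mul_sub, norm_mul, norm_real, Real.norm_of_nonneg hs0, map_mul, conj_ofReal,
      show (s : ℂ) * conj (f 0) * ((s : ℂ) * f w) = (s : ℂ) ^ 2 * (conj (f 0) * f w) by ring]
      at this
  refine le_of_tendsto_of_tendsto (b := 𝓝[<] 1) ?_ ?_
    (eventually_of_mem (Ico_mem_nhdsLT zero_lt_one) hscaled)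
  · exact ((continuous_id.mul continuous_const).tendsto' 1 _ (one_mul _)).mono_left
      nhdsWithin_le_nhds
  · refine (Continuous.tendsto' ?_ 1 _ (by simp)).mono_left nhdsWithin_le_nhds
    fun_prop

theorem norm_deriv_le_one_sub_sq_of_mapsTo_closedBall {f : ℂ → ℂ}
    (hd : DifferentiableOn ℂ f (ball 0 1)) (hf : MapsTo f (ball 0 1) (closedBall 0 1)) :
    ‖deriv f 0‖ ≤ 1 - ‖f 0‖ ^ 2 := by
  have hball : ball (0 : ℂ) 1 ∈ 𝓝 0 := ball_mem_nhds 0 one_pos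
  have hslope : ∀ᶠ w in 𝓝[≠] 0, ‖slope f 0 w‖ ≤ ‖1 - conj (f 0) * f w‖ := by
    filter_upwards [nhdsWithin_le_nhds hball, self_mem_nhdsWithin] with w hw hw0
    rw [slope_def_field, sub_zero, norm_div, div_le_iff₀ (norm_pos_iff.2 hw0), mul_comm]
    exact schwarz_pick_of_mapsTo_closedBall hd hf hw
  have hlim : Tendsto (fun w => ‖1 - conj (f 0) * f w‖) (𝓝[≠] 0) (𝓝 (1 - ‖f 0‖ ^ 2)) := by
    have hcont := (hd.differentiableAt hball).continuousAt.tendsto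
    have h1 : ‖1 - conj (f 0) * f 0‖ = 1 - ‖f 0‖ ^ 2 := by
      have hf0 : ‖f 0‖ ≤ 1 := mem_closedBall_zero_iff.1 (hf (mem_of_mem_nhds hball))
      rw [mul_comm, mul_conj, ← Complex.sq_norm, ← ofReal_one, ← ofReal_sub, norm_real,
        Real.norm_of_nonneg (by nlinarith [norm_nonneg (f 0)])]
    rw [← h1]
    exact ((continuous_const.sub (continuous_const.mul continuous_id)).norm.tendsto _).comp
      hcont |>.mono_left nhdsWithin_le_nhds
  exact le_of_tendsto_of_tendsto
    ((hd.differentiableAt hball).hasDerivAt.tendsto_slope.norm) hlim hslope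

theorem norm_mul_one_add_mul_le_add_of_norm_sub_le {a v : ℂ} {ρ : ℝ} (ha : ‖a‖ ≤ 1)
    (hρ0 : 0 ≤ ρ) (hρ1 : ρ < 1) (h : ‖v - a‖ ≤ ρ * ‖1 - conj a * v‖) :
    ‖v‖ * (1 + ‖a‖ * ρ) ≤ ‖a‖ + ρ := by
  refine mul_one_add_mul_le_add_of_sq_sub_mul_le (norm_nonneg a) ha hρ0 hρ1 ?_
  have hsq : ‖v - a‖ ^ 2 ≤ ρ ^ 2 * ‖1 - conj a * v‖ ^ 2 := by
    rw [← mul_pow]; exact pow_le_pow_left₀ (norm_nonneg _) h 2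
  have hid := normSq_one_sub_conj_mul_sub_normSq_sub v a
  rw [← Complex.sq_norm, ← Complex.sq_norm, ← Complex.sq_norm, ← Complex.sq_norm] at hid
  have htri : (‖v‖ - ‖a‖) ^ 2 ≤ ‖v - a‖ ^ 2 := sq_le_sq' (abs_le.1 (abs_norm_sub_norm_le v a)).1
    (abs_le.1 (abs_norm_sub_norm_le v a)).2
  have hρsq : 0 ≤ 1 - ρ ^ 2 := by nlinarith
  nlinarith [mul_le_mul_of_nonneg_right htri hρsq]

theorem hasFPowerSeriesOnBall_ofScalars_of_hasSum {c : ℕ → ℂ} {H : ℂ → ℂ} {R : NNReal}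
    (hR : 0 < R) (h : ∀ w ∈ ball (0 : ℂ) R, HasSum (fun j => c j * w ^ j) (H w)) :
    HasFPowerSeriesOnBall H (.ofScalars ℂ c) 0 R := by
  refine ⟨ENNReal.le_of_forall_nnreal_lt fun ρ hρ => ?_, ENNReal.coe_pos.2 hR, fun {w} hw => ?_⟩
  · have hρR : ((ρ : ℝ) : ℂ) ∈ ball (0 : ℂ) R := by
      simpa using ENNReal.coe_lt_coe.1 hρ
    refine (FormalMultilinearSeries.ofScalars ℂ c).le_radius_of_tendsto (l := 0) ?_
    simpa [norm_mul, FormalMultilinearSeries.ofScalars_norm] using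
      (h _ hρR).summable.tendsto_atTop_zero.norm
  · have hw' : w ∈ ball (0 : ℂ) R := by simpa using hw
    simpa [FormalMultilinearSeries.ofScalars_apply_eq, mul_comm] using h w hw'

theorem norm_coeff_le_one_sub_sq {a : ℕ → ℂ} {f : ℂ → ℂ}
    (hsum : ∀ z ∈ ball (0 : ℂ) 1, HasSum (fun n => a n * z ^ n) (f z))
    (hf : ∀ z ∈ ball (0 : ℂ) 1, ‖f z‖ ≤ 1) {k : ℕ} (hk : k ≠ 0) :
    ‖a k‖ ≤ 1 - ‖a 0‖ ^ 2 := by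
  have hsection : ∀ w ∈ ball (0 : ℂ) 1,
      ∃ S, ‖S‖ ≤ 1 ∧ HasSum (fun j => a (j * k) * w ^ j) S := by
    intro w hw
    obtain ⟨z, rfl⟩ := IsAlgClosed.exists_pow_nat_eq w (Nat.pos_of_ne_zero hk)
    rw [mem_ball_zero_iff, norm_pow, pow_lt_one_iff_of_nonneg (norm_nonneg z) hk] at hw
    obtain ⟨ω, hω⟩ : ∃ ω : ℂ, IsPrimitiveRoot ω k := ⟨_, isPrimitiveRoot_exp k hk⟩
    have hmem : ∀ i, ω ^ i * z ∈ ball (0 : ℂ) 1 := fun i => by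
      rwa [mem_ball_zero_iff, norm_mul, norm_pow, hω.norm'_eq_one hk, one_pow, one_mul]
    refine ⟨_, ?_, by simpa only [pow_mul'] using
      hasSum_mul_pow_mul_of_isPrimitiveRoot hk hω fun i => hsum _ (hmem i)⟩
    rw [norm_mul, norm_inv, norm_natCast]
    refine inv_mul_le_one_of_le₀ ((norm_sum_le _ _).trans ?_) (Nat.cast_nonneg k)
    simpa using Finset.sum_le_sum (s := Finset.range k) fun i _ => hf _ (hmem i)
  choose! H hH_norm hH_sum using hsection
  have hp : HasFPowerSeriesOnBall H (.ofScalars ℂ fun j => a (j * k)) 0 1 :=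
    hasFPowerSeriesOnBall_ofScalars_of_hasSum one_pos (by simpa using hH_sum)
  have hd : DifferentiableOn ℂ H (ball 0 1) := by
    simpa only [← ENNReal.coe_one, Metric.eball_coe, NNReal.coe_one] using hp.differentiableOn
  have h0 : H 0 = a 0 := by simpa using (hp.coeff_zero fun _ => 1).symm
  have h1 : deriv H 0 = a k := by
    simpa [FormalMultilinearSeries.coeff_ofScalars] using hp.hasFPowerSeriesAt.deriv
  simpa [h0, h1] using norm_deriv_le_one_sub_sq_of_mapsTo_closedBall hd
    fun w hw => mem_closedBall_zero_iff.2 (hH_norm w hw)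

end Complex

theorem tsum_mul_pow_add_le {c : ℕ → ℝ} {B r : ℝ} (N : ℕ) (hc0 : ∀ k, 0 ≤ c (N + k))
    (hcB : ∀ k, c (N + k) ≤ B) (hr0 : 0 ≤ r) (hr1 : r < 1) :
    ∑' k, c (N + k) * r ^ (N + k) ≤ B * r ^ N / (1 - r) := by
  have hgeom : HasSum (fun k => B * r ^ N * r ^ k) (B * r ^ N / (1 - r)) := by
    simpa only [div_eq_mul_inv] using (hasSum_geometric_of_lt_one hr0 hr1).mul_left (B * r ^ N)
  have hle : ∀ k, c (N + k) * r ^ (N + k) ≤ B * r ^ N * r ^ k := fun k => by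
    rw [pow_add, ← mul_assoc]
    gcongr
    exact hcB k
  refine (Summable.tsum_le_tsum hle ?_ hgeom.summable).trans_eq hgeom.tsum_eq
  exact hgeom.summable.of_nonneg_of_le (fun k => mul_nonneg (hc0 k) (pow_nonneg hr0 _)) hle

theorem div_add_div_le_one_of_two_mul_le {t ρ r s : ℝ} (ht0 : 0 ≤ t) (ht1 : t ≤ 1) (hρ0 : 0 ≤ ρ)
    (hr1 : r < 1) (hs : 0 ≤ s) (h : 2 * s * (1 + ρ) ≤ (1 - r) * (1 - ρ)) :
    (t + ρ) / (1 + t * ρ) + (1 - t ^ 2) * s / (1 - r) ≤ 1 := by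
  have htρ : 0 < 1 + t * ρ := by positivity
  have hr : 0 < 1 - r := by linarith
  rw [div_add_div _ _ htρ.ne' hr.ne', div_le_one (mul_pos htρ hr)]
  have hA : (1 + t) * (1 + t * ρ) ≤ 2 * (1 + ρ) := by nlinarith [mul_nonneg (sub_nonneg.2 ht1) hρ0]
  nlinarith [mul_le_mul_of_nonneg_left hA (mul_nonneg (sub_nonneg.2 ht1) hs),
    mul_le_mul_of_nonneg_left h (sub_nonneg.2 ht1)]

/-- Theorem 2: if `f` is analytic on the unit disk with `|f| ≤ 1`, `m, N ≥ 1`, and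
`2r^N(1+r^m) ≤ (1-r)(1-r^m)`, then `|f(z^m)| + ∑_{k=N}^∞ |a_k| r^k ≤ 1` for `|z| = r`. -/
theorem bohr_rogosinski_radius_power (f : ℂ → ℂ) (a : ℕ → ℂ)
    (hf : AnalyticOn ℂ f (ball (0:ℂ) 1))
    (hsum : ∀ z ∈ ball (0:ℂ) 1, HasSum (fun k : ℕ => a k * z ^ k) (f z))
    (hbound : ∀ z ∈ ball (0:ℂ) 1, ‖f z‖ ≤ 1)
    (m N : ℕ) (hm : 1 ≤ m) (hN : 1 ≤ N)
    (r : ℝ) (hr0 : 0 ≤ r) (hr1 : r < 1)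
    (hroot : 2 * r ^ N * (1 + r ^ m) ≤ (1 - r) * (1 - r ^ m))
    (z : ℂ) (hz : ‖z‖ = r) :
    ‖f (z ^ m)‖ + ∑' k : ℕ, ‖a (N + k)‖ * r ^ (N + k) ≤ 1 := by
  have h0 : (0 : ℂ) ∈ ball 0 1 := mem_ball_self one_pos
  have hf0 : f 0 = a 0 := (hsum 0 h0).unique <| by
    simpa using hasSum_single (f := fun n => a n * (0 : ℂ) ^ n) 0 fun n hn => by simp [hn]
  have ha0 : ‖a 0‖ ≤ 1 := hf0 ▸ hbound 0 h0
  have hρ0 : 0 ≤ r ^ m := pow_nonneg hr0 m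
  have hρ1 : r ^ m < 1 := pow_lt_one₀ hr0 hr1 (by omega)
  have hzm : z ^ m ∈ ball 0 1 := by rwa [mem_ball_zero_iff, norm_pow, hz]
  have hmaps : MapsTo f (ball 0 1) (closedBall 0 1) := fun w hw =>
    mem_closedBall_zero_iff.2 (hbound w hw)
  have hpoint : ‖f (z ^ m)‖ ≤ (‖a 0‖ + r ^ m) / (1 + ‖a 0‖ * r ^ m) := by
    rw [le_div_iff₀ (by positivity)]
    refine Complex.norm_mul_one_add_mul_le_add_of_norm_sub_le ha0 hρ0 hρ1 ?_
    simpa only [hf0, norm_pow, hz] using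
      Complex.schwarz_pick_of_mapsTo_closedBall hf.differentiableOn hmaps hzm
  have htail : ∑' k, ‖a (N + k)‖ * r ^ (N + k) ≤ (1 - ‖a 0‖ ^ 2) * r ^ N / (1 - r) :=
    tsum_mul_pow_add_le (c := fun k => ‖a k‖) N (fun k => norm_nonneg _)
      (fun k => Complex.norm_coeff_le_one_sub_sq hsum hbound (by omega)) hr0 hr1
  exact (add_le_add hpoint htail).trans (div_add_div_le_one_of_two_mul_le (norm_nonneg _) ha0
    hρ0 hr1 (pow_nonneg hr0 N) hroot)
end

section
/- Fix an integer N ≥ 1. For each integer m ≥ 1, let r_m ∈ (0,1) satisfy 2 r_m^N (1 + r_m^m) = (1 - r_m)(1 - r_m^m). Then r_m converges as m → ∞ to A_N, the unique root in (0,1) of the equation 2r^N = 1 - r. Moreover A_1 = 1/3 and A_2 = 1/2. -/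
/-- Theorem 2, limit in `m`: for fixed `N ≥ 1`, the roots `R_{m,N} ∈ (0,1)` of
`2r^N(1+r^m) = (1-r)(1-r^m)` tend, as `m → ∞`, to `A_N`, the unique root in `(0,1)` of
`2r^N = 1 - r`; moreover `A_1 = 1/3` and `A_2 = 1/2`. -/
theorem bohr_rogosinski_radius_power_tendsto_root (N : ℕ) (hN : 1 ≤ N) (r : ℕ → ℝ)
    (hr : ∀ m : ℕ, 1 ≤ m → r m ∈ Set.Ioo (0:ℝ) 1 ∧
      2 * (r m) ^ N * (1 + (r m) ^ m) = (1 - r m) * (1 - (r m) ^ m))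
    (A : ℝ) (hA : A ∈ Set.Ioo (0:ℝ) 1) (hAroot : 2 * A ^ N = 1 - A) :
    (∀ B ∈ Set.Ioo (0:ℝ) 1, 2 * B ^ N = 1 - B → B = A) ∧
    Filter.Tendsto r Filter.atTop (nhds A) ∧
    (N = 1 → A = 1/3) ∧ (N = 2 → A = 1/2) := by
  obtain ⟨hA0, hA1⟩ := hA
  refine ⟨?_, ?_, ?_, ?_⟩
  · intro B hB hBroot
    obtain ⟨hB0, hB1⟩ := hB
    rcases lt_trichotomy B A with h | h | h
    · have := pow_le_pow_left₀ hB0.le h.le N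
      linarith
    · exact h
    · have := pow_le_pow_left₀ hA0.le h.le N
      linarith
  · rw [Metric.tendsto_atTop]
    intro ε hε
    set a : ℝ := max (A/2) (A - ε) with ha
    have ha0 : 0 < a := lt_max_of_lt_left (by linarith)
    have haA : a < A := max_lt (by linarith) (by linarith)
    have ha1 : a < 1 := haA.trans hA1
    have haε : A - a ≤ ε := by
      have := le_max_right (A/2) (A - ε)
      linarith
    have hga : 2 * a ^ N + a < 1 := by
      have h2 : a ^ N < A ^ N := pow_lt_pow_left₀ haA ha0.le (by omega)
      linarith
    have hpow : Filter.Tendsto (fun m => a ^ m) Filter.atTop (nhds 0) :=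
      tendsto_pow_atTop_nhds_zero_of_lt_one ha0.le ha1
    have hF : Filter.Tendsto (fun m => 2 * a ^ N * (1 + a ^ m) - (1 - a) * (1 - a ^ m))
        Filter.atTop (nhds (2 * a ^ N * (1 + 0) - (1 - a) * (1 - 0))) :=
      ((tendsto_const_nhds.add hpow).const_mul _).sub
        ((tendsto_const_nhds.sub hpow).const_mul _)
    have hFneg : ∀ᶠ m in Filter.atTop,
        2 * a ^ N * (1 + a ^ m) - (1 - a) * (1 - a ^ m) < 0 := by
      apply hF.eventually_lt_const
      nlinarith
    obtain ⟨M, hM⟩ := Filter.eventually_atTop.1 (hFneg.and (Filter.eventually_ge_atTop 1))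
    refine ⟨M, fun m hm => ?_⟩
    obtain ⟨hFm, hm1⟩ := hM m hm
    obtain ⟨⟨hr0, hr1⟩, hroot⟩ := hr m hm1
    have hp0 : 0 < (r m) ^ m := pow_pos hr0 m
    have hp1 : (r m) ^ m < 1 := pow_lt_one₀ hr0.le hr1 (by omega)
    have hrN : 0 < (r m) ^ N := pow_pos hr0 N
    -- first: 2 r^N < 1 - r, hence r < A
    have h1 : 2 * (r m) ^ N * (1 - (r m) ^ m) < (1 - r m) * (1 - (r m) ^ m) := by
      nlinarith
    have key : 2 * (r m) ^ N < 1 - r m :=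
      lt_of_mul_lt_mul_right (by nlinarith) (by linarith : (0:ℝ) ≤ 1 - (r m) ^ m)
    have hrA : r m < A := by
      by_contra h
      push_neg at h
      have hAN := pow_le_pow_left₀ hA0.le h N
      linarith
    -- second: a < r m
    have harm : a < r m := by
      by_contra h
      push_neg at h
      have h1 : (r m) ^ N ≤ a ^ N := pow_le_pow_left₀ hr0.le h N
      have h2 : (r m) ^ m ≤ a ^ m := pow_le_pow_left₀ hr0.le h m
      have ham1 : a ^ m ≤ 1 := pow_le_one₀ ha0.le ha1.le
      have h3 : (r m) ^ N * (1 + (r m) ^ m) ≤ a ^ N * (1 + a ^ m) :=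
        mul_le_mul h1 (by linarith) (by positivity) (by positivity)
      have h4 : (1 - a) * (1 - a ^ m) ≤ (1 - r m) * (1 - (r m) ^ m) :=
        mul_le_mul (by linarith) (by linarith) (by linarith) (by linarith)
      linarith
    rw [Real.dist_eq, abs_lt]
    constructor <;> linarith
  · intro h
    subst h
    simp only [pow_one] at hAroot
    linarith
  · intro h
    subst h
    have h0 : (2 * A - 1) * (A + 1) = 0 := by linear_combination hAroot
    rcases mul_eq_zero.mp h0 with h1 | h1 <;> linarith
end

section
/- Let f(z) = ∑_{k=0}^∞ a_k z^k be analytic on the open unit disk D with |f(z)| ≤ 1 for all z ∈ D. Then for all r ≤ 1/3: |a_0| + ∑_{k=1}^∞ (|a_k| + (1/2)|a_k|^2) r^k ≤ 1. -/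
open Metric

/-!
Write `A = |a₀|`, `S₁ = ∑_{k ≥ 1} |a_k| r^k` and `S₂ = ∑_{k ≥ 1} |a_k|² r^k`.
By Schwarz–Pick, `|f z - a₀| ≤ |z| |1 - conj a₀ * f z|`; squaring this on the circle `|z| = √r`
and averaging with Parseval's identity gives `S₂ ≤ r ((1 - A²)² + A² S₂)`, hence
`S₂ (3 - A²) ≤ (1 - A²)²` when `r ≤ 1/3`. Cauchy–Schwarz against the geometric weights `r^k`
gives `S₁² ≤ S₂ r / (1 - r) ≤ S₂ / 2`, and `A + S₁ + S₂ / 2 ≤ 1` follows from these two bounds.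
-/

open Complex Real MeasureTheory Set Finset
open scoped ComplexConjugate

lemma integral_circleMap_zero_pow_mul_conj_pow (R : ℝ) (j k : ℕ) :
    ∫ θ in 0..2 * π, circleMap 0 R θ ^ j * conj (circleMap 0 R θ ^ k) =
      if j = k then ((2 * π * R ^ (2 * j) : ℝ) : ℂ) else 0 := by
  have hz : ∀ θ : ℝ, circleMap 0 R θ ^ j * conj (circleMap 0 R θ ^ k) =
      R ^ (j + k) * exp (((j : ℂ) - k) * I * θ) := fun θ => by
    rw [map_pow, conj_circleMap_zero, circleMap_zero_pow, circleMap_zero_pow, circleMap_zero_mul,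
      circleMap_zero]
    push_cast
    ring_nf
  simp_rw [hz, intervalIntegral.integral_const_mul]
  split_ifs with hjk
  · subst hjk
    simp only [sub_self, zero_mul, Complex.exp_zero, intervalIntegral.integral_const, sub_zero,
      real_smul, mul_one]
    push_cast
    ring
  · have hc : ((j : ℂ) - k) * I ≠ 0 := by simpa [sub_eq_zero] using hjk
    have h2π : exp (((j : ℂ) - k) * I * (2 * π)) = 1 := by
      rw [← exp_int_mul_two_pi_mul_I ((j : ℤ) - k)]
      push_cast
      ring_nf
    rw [integral_exp_mul_complex hc]
    push_cast
    simp [h2π]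

lemma hasSum_prod_mul_conj {ι : Type*} {u : ι → ℂ} {s : ℂ} (h : HasSum u s) :
    HasSum (fun p : ι × ι => u p.1 * conj (u p.2)) ((‖s‖ ^ 2 : ℝ) : ℂ) := by
  -- unconditional summability in `ℂ` is absolute summability
  have hu : Summable fun i => ‖u i‖ := summable_norm_iff.2 h.summable
  have huu := summable_mul_of_summable_norm (f := u) (g := fun i => conj (u i)) hu
    (by simpa only [RCLike.norm_conj] using hu)
  rw [ofReal_pow, ← mul_conj', h.mul_eq (Complex.hasSum_conj'.2 h) huu.hasSum]
  exact huu.hasSum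

/-- Parseval's identity on the circle of radius `R`. -/
theorem hasSum_sq_norm_mul_pow_circleAverage {b : ℕ → ℂ} {g : ℂ → ℂ} {R : ℝ} (hR : 0 ≤ R)
    (hg : ∀ z ∈ sphere (0 : ℂ) R, HasSum (fun k => b k * z ^ k) (g z)) :
    HasSum (fun k => ‖b k‖ ^ 2 * R ^ (2 * k)) (circleAverage (fun z => ‖g z‖ ^ 2) 0 R) := by
  have hmem : ∀ θ, circleMap 0 R θ ∈ sphere (0 : ℂ) R := circleMap_mem_sphere 0 hR
  have hnorm : ∀ θ k, ‖b k * circleMap 0 R θ ^ k‖ = ‖b k‖ * R ^ k := fun θ k => by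
    rw [norm_mul, norm_pow, norm_circleMap_zero, abs_of_nonneg hR]
  have hb : Summable fun k => ‖b k‖ * R ^ k := by
    simpa only [hnorm] using summable_norm_iff.2 (hg _ (hmem 0)).summable
  set F : ℕ × ℕ → ℝ → ℂ := fun p θ => b p.1 * circleMap 0 R θ ^ p.1 *
    conj (b p.2 * circleMap 0 R θ ^ p.2) with hF
  have hF_norm : ∀ p θ, ‖F p θ‖ = ‖b p.1‖ * R ^ p.1 * (‖b p.2‖ * R ^ p.2) := fun p θ => by
    rw [hF, norm_mul, RCLike.norm_conj, hnorm, hnorm]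
  have hF_cont : ∀ p, Continuous (F p) := fun p => by simp only [hF]; fun_prop
  have hint : HasSum (fun p => ∫ θ in 0..2 * π, F p θ)
      (∫ θ in 0..2 * π, ((‖g (circleMap 0 R θ)‖ ^ 2 : ℝ) : ℂ)) :=
    intervalIntegral.hasSum_integral_of_dominated_convergence
      (fun p _ => ‖b p.1‖ * R ^ p.1 * (‖b p.2‖ * R ^ p.2))
      (fun p => (hF_cont p).aestronglyMeasurable) (fun p => ae_of_all _ fun θ _ => (hF_norm p θ).le)
      (ae_of_all _ fun _ _ => hb.mul_of_nonneg hb (fun _ => by positivity) fun _ => by positivity)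
      intervalIntegrable_const (ae_of_all _ fun θ _ => (hasSum_prod_mul_conj (hg _ (hmem θ)) :))
  have hF_int : ∀ p : ℕ × ℕ, ∫ θ in 0..2 * π, F p θ =
      if p.1 = p.2 then ((2 * π * (‖b p.1‖ ^ 2 * R ^ (2 * p.1)) : ℝ) : ℂ) else 0 := by
    rintro ⟨j, k⟩
    have hsplit : ∀ θ, F (j, k) θ =
        b j * conj (b k) * (circleMap 0 R θ ^ j * conj (circleMap 0 R θ ^ k)) := fun θ => by
      simp only [hF, map_mul]
      ring
    simp_rw [hsplit, intervalIntegral.integral_const_mul, integral_circleMap_zero_pow_mul_conj_pow]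
    split_ifs with hjk
    · subst hjk
      rw [mul_conj', ← ofReal_pow, ← ofReal_mul]
      ring_nf
    · rw [mul_zero]
  have hdiag : Function.Injective fun k : ℕ => (k, k) := fun _ _ h => (Prod.ext_iff.1 h).1
  rw [funext hF_int, ← hdiag.hasSum_iff (by rintro ⟨j, k⟩ hjk; grind)] at hint
  simp only [Function.comp_def, if_true, intervalIntegral.integral_ofReal, hasSum_ofReal] at hint
  rw [circleAverage_def, smul_eq_mul]
  simpa [← mul_assoc] using hint.mul_left (2 * π)⁻¹

lemma sq_norm_one_sub_conj_mul_sub_sq_norm_sub (u v : ℂ) :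
    ‖1 - conj u * v‖ ^ 2 - ‖v - u‖ ^ 2 = (1 - ‖u‖ ^ 2) * (1 - ‖v‖ ^ 2) := by
  simp only [Complex.sq_norm, normSq_apply, sub_re, sub_im, mul_re, mul_im, one_re, one_im,
    conj_re, conj_im]
  ring

lemma norm_sub_le_norm_one_sub_conj_mul {u v : ℂ} (hu : ‖u‖ ≤ 1) (hv : ‖v‖ ≤ 1) :
    ‖v - u‖ ≤ ‖1 - conj u * v‖ := by
  refine (pow_le_pow_iff_left₀ (norm_nonneg _) (norm_nonneg _) two_ne_zero).1 ?_
  have hid := sq_norm_one_sub_conj_mul_sub_sq_norm_sub u v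
  have hpos : 0 ≤ (1 - ‖u‖ ^ 2) * (1 - ‖v‖ ^ 2) := by
    apply mul_nonneg <;> nlinarith [norm_nonneg u, norm_nonneg v]
  linarith

/-- The Schwarz–Pick inequality, at the base point `0`. -/
theorem norm_sub_apply_zero_le_mul_norm_one_sub_conj_mul {f : ℂ → ℂ}
    (hd : DifferentiableOn ℂ f (ball 0 1)) (h_maps : MapsTo f (ball 0 1) (closedBall 0 1))
    {z : ℂ} (hz : z ∈ ball (0 : ℂ) 1) :
    ‖f z - f 0‖ ≤ ‖z‖ * ‖1 - conj (f 0) * f z‖ := by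
  have h0 : (0 : ℂ) ∈ ball (0 : ℂ) 1 := mem_ball_self one_pos
  have hbound : ∀ w ∈ ball (0 : ℂ) 1, ‖f w‖ ≤ 1 := fun w hw =>
    mem_closedBall_zero_iff.1 (h_maps hw)
  rcases (hbound 0 h0).eq_or_lt with ha | ha
  · have hmax : IsMaxOn (norm ∘ f) (ball 0 1) 0 := fun w hw => by
      simpa [ha] using hbound w hw
    have hconst := Complex.eqOn_of_isPreconnected_of_isMaxOn_norm
      (convex_ball (0 : ℂ) 1).isPreconnected isOpen_ball hd h0 hmax hz
    rw [hconst, Function.const_apply, sub_self, norm_zero]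
    positivity
  · have hden : ∀ w ∈ ball (0 : ℂ) 1, 1 - conj (f 0) * f w ≠ 0 := fun w hw h => by
      have : ‖conj (f 0) * f w‖ < 1 := by
        rw [norm_mul, RCLike.norm_conj]
        nlinarith [hbound w hw, norm_nonneg (f w), norm_nonneg (f 0)]
      simp [← sub_eq_zero.1 h] at this
    set φ : ℂ → ℂ := fun w => (f w - f 0) / (1 - conj (f 0) * f w) with hφ
    have hφ_diff : DifferentiableOn ℂ φ (ball 0 1) :=
      (hd.sub_const _).div ((differentiableOn_const _).sub ((differentiableOn_const _).mul hd)) hden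
    have hφ_maps : MapsTo φ (ball 0 1) (closedBall 0 1) := fun w hw => by
      rw [mem_closedBall_zero_iff, hφ, norm_div, div_le_one (norm_pos_iff.2 (hden w hw))]
      exact norm_sub_le_norm_one_sub_conj_mul ha.le (hbound w hw)
    have hφz := Complex.norm_le_norm_of_mapsTo_ball hφ_diff hφ_maps (by simp [hφ])
      (mem_ball_zero_iff.1 hz)
    calc ‖f z - f 0‖ = ‖φ z‖ * ‖1 - conj (f 0) * f z‖ := by
          rw [hφ, norm_div, div_mul_cancel₀ _ (norm_ne_zero_iff.2 (hden z hz))]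
      _ ≤ ‖z‖ * ‖1 - conj (f 0) * f z‖ := by gcongr

lemma sq_tsum_le_tsum_mul_tsum_of_sq_le_mul {ι : Type*} {x f g : ι → ℝ} (hx : 0 ≤ x)
    (hf : 0 ≤ f) (hg : 0 ≤ g) (hf_sum : Summable f) (hg_sum : Summable g)
    (h : ∀ i, x i ^ 2 ≤ f i * g i) :
    (∑' i, x i) ^ 2 ≤ (∑' i, f i) * ∑' i, g i := by
  have hpartial : ∀ s : Finset ι, ∑ i ∈ s, x i ≤ √((∑' i, f i) * ∑' i, g i) := fun s =>
    Real.le_sqrt_of_sq_le <|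
      (sum_sq_le_sum_mul_sum_of_sq_le_mul s (fun i _ => hf i) (fun i _ => hg i) fun i _ => h i).trans
        (mul_le_mul (hf_sum.sum_le_tsum s fun i _ => hf i) (hg_sum.sum_le_tsum s fun i _ => hg i)
          (sum_nonneg fun i _ => hg i) (tsum_nonneg hf))
  calc (∑' i, x i) ^ 2 ≤ √((∑' i, f i) * ∑' i, g i) ^ 2 := by
        gcongr
        · exact tsum_nonneg hx
        · exact Real.tsum_le_of_sum_le hx hpartial
    _ = (∑' i, f i) * ∑' i, g i := Real.sq_sqrt (mul_nonneg (tsum_nonneg hf) (tsum_nonneg hg))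

lemma sq_tsum_mul_pow_succ_le {u : ℕ → ℝ} (hu : 0 ≤ u) {r : ℝ} (hr0 : 0 ≤ r) (hr1 : r < 1)
    (hsum : Summable fun k => u k ^ 2 * r ^ (k + 1)) :
    (∑' k, u k * r ^ (k + 1)) ^ 2 ≤ (∑' k, u k ^ 2 * r ^ (k + 1)) * (r / (1 - r)) := by
  have hgeom : HasSum (fun k => r ^ (k + 1)) (r / (1 - r)) := by
    simpa only [pow_succ', div_eq_mul_inv] using (hasSum_geometric_of_lt_one hr0 hr1).mul_left r
  rw [← hgeom.tsum_eq]
  exact sq_tsum_le_tsum_mul_tsum_of_sq_le_mul (fun k => mul_nonneg (hu k) (pow_nonneg hr0 _))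
    (fun k => by positivity) (fun k => by positivity) hsum hgeom.summable
    fun k => le_of_eq (by ring)

lemma add_add_half_le_one {A S₁ S₂ : ℝ} (hA₀ : 0 ≤ A) (hA₁ : A ≤ 1) (hS₁ : 0 ≤ S₁)
    (hS₂ : S₂ * (3 - A ^ 2) ≤ (1 - A ^ 2) ^ 2) (hS₁₂ : 2 * S₁ ^ 2 ≤ S₂) :
    A + S₁ + S₂ / 2 ≤ 1 := by
  have hD : 0 < 3 - A ^ 2 := by nlinarith
  have hN : 0 ≤ (1 - A) * (5 - A - A ^ 2 + A ^ 3) := by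
    apply mul_nonneg (by linarith)
    nlinarith [mul_nonneg hA₀ (mul_nonneg hA₀ hA₀)]
  -- `(1 - A) (5 - A - A² + A³) = 2 (3 - A²) (1 - A) - (1 - A²)²`, and its square exceeds
  -- `2 (3 - A²) (1 - A²)²` by `(1 - A)⁴ (19 + 16 A + A⁴)`
  have hS₁N : 2 * (3 - A ^ 2) * S₁ ≤ (1 - A) * (5 - A - A ^ 2 + A ^ 3) := by
    refine (pow_le_pow_iff_left₀ (by positivity) hN two_ne_zero).1 ?_
    have hS₂' : 0 ≤ S₂ := by nlinarith
    nlinarith [mul_le_mul_of_nonneg_left hS₂ (by positivity : 0 ≤ 2 * (3 - A ^ 2)),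
      mul_le_mul_of_nonneg_left hS₁₂ (by positivity : 0 ≤ 2 * (3 - A ^ 2) ^ 2),
      (by positivity : 0 ≤ (1 - A) ^ 4 * (19 + 16 * A + A ^ 4))]
  nlinarith

lemma eq_of_hasSum_mul_zero_pow {a : ℕ → ℂ} {w : ℂ} (h : HasSum (fun k => a k * 0 ^ k) w) :
    w = a 0 :=
  h.unique <| by simpa using hasSum_single (f := fun k => a k * 0 ^ k) 0 fun k hk => by simp [hk]

lemma sphere_sqrt_subset_ball {r : ℝ} (hr : r < 1) : sphere (0 : ℂ) √r ⊆ ball 0 1 := fun z hz => by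
  rw [mem_ball_zero_iff, mem_sphere_zero_iff_norm.1 hz]
  exact (Real.sqrt_lt' one_pos).2 (by simpa using hr)

section PowerSeriesOnDisk

variable {f : ℂ → ℂ} {a : ℕ → ℂ}

lemma summable_norm_mul_pow (hsum : ∀ z ∈ ball (0 : ℂ) 1, HasSum (fun k => a k * z ^ k) (f z))
    {r : ℝ} (hr0 : 0 ≤ r) (hr1 : r < 1) : Summable fun k => ‖a k‖ * r ^ k := by
  have hr : (r : ℂ) ∈ ball (0 : ℂ) 1 := by simpa [abs_of_nonneg hr0] using hr1
  simpa [abs_of_nonneg hr0] using summable_norm_iff.2 (hsum _ hr).summable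

lemma summable_sq_norm_mul_pow (hsum : ∀ z ∈ ball (0 : ℂ) 1, HasSum (fun k => a k * z ^ k) (f z))
    {r : ℝ} (hr0 : 0 ≤ r) (hr1 : r < 1) : Summable fun k => ‖a k‖ ^ 2 * r ^ k := by
  simpa [pow_mul, Real.sq_sqrt hr0] using (hasSum_sq_norm_mul_pow_circleAverage (sqrt_nonneg r)
    fun z hz => hsum z (sphere_sqrt_subset_ball hr1 hz)).summable

theorem tsum_sq_norm_coeff_succ_le (hd : DifferentiableOn ℂ f (ball 0 1))
    (h_maps : MapsTo f (ball 0 1) (closedBall 0 1))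
    (hsum : ∀ z ∈ ball (0 : ℂ) 1, HasSum (fun k => a k * z ^ k) (f z)) {r : ℝ} (hr0 : 0 ≤ r)
    (hr1 : r < 1) :
    ∑' k, ‖a (k + 1)‖ ^ 2 * r ^ (k + 1) ≤
      r * ((1 - ‖a 0‖ ^ 2) ^ 2 + ‖a 0‖ ^ 2 * ∑' k, ‖a (k + 1)‖ ^ 2 * r ^ (k + 1)) := by
  set ρ := √r
  have hρ0 : 0 ≤ ρ := sqrt_nonneg r
  have hρ_pow : ∀ k, ρ ^ (2 * k) = r ^ k := fun k => by rw [pow_mul, sq_sqrt hr0]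
  have hsphere := sphere_sqrt_subset_ball hr1
  have hf0 : f 0 = a 0 := eq_of_hasSum_mul_zero_pow (hsum 0 (mem_ball_self one_pos))
  set A := ‖a 0‖
  set S := ∑' k, ‖a (k + 1)‖ ^ 2 * r ^ (k + 1)
  -- `f - a₀` and `1 - conj a₀ * f` have coefficients `(0, a₁, a₂, …)` and
  -- `(1 - A², -conj a₀ * a₁, -conj a₀ * a₂, …)`
  have hS_sub : circleAverage (fun z => ‖f z - a 0‖ ^ 2) 0 ρ = S := by
    have h := hasSum_sq_norm_mul_pow_circleAverage (b := fun k => if k = 0 then 0 else a k)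
      (g := fun z => f z - a 0) hρ0 fun z hz => by
        have e : (fun k => (if k = 0 then 0 else a k) * z ^ k) =
            fun k => a k * z ^ k - if k = 0 then a 0 else 0 := by
          funext k
          rcases k with _ | k <;> simp
        rw [e]
        exact (hsum z (hsphere hz)).sub (hasSum_ite_eq 0 (a 0))
    rw [← hasSum_nat_add_iff' 1] at h
    simpa [hρ_pow] using h.tsum_eq.symm
  have hS_one_sub : circleAverage (fun z => ‖1 - conj (a 0) * f z‖ ^ 2) 0 ρ =
      (1 - A ^ 2) ^ 2 + A ^ 2 * S := by
    have h := hasSum_sq_norm_mul_pow_circleAverage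
      (b := fun k => (if k = 0 then 1 else 0) - conj (a 0) * a k)
      (g := fun z => 1 - conj (a 0) * f z) hρ0 fun z hz => by
        have e : (fun k => ((if k = 0 then 1 else 0) - conj (a 0) * a k) * z ^ k) =
            fun k => (if k = 0 then 1 else 0) - conj (a 0) * (a k * z ^ k) := by
          funext k
          rcases k with _ | k <;> simp [mul_assoc]
        rw [e]
        exact (hasSum_ite_eq 0 (1 : ℂ)).sub ((hsum z (hsphere hz)).mul_left (conj (a 0)))
    rw [← hasSum_nat_add_iff' 1] at h
    have hu₀ : ‖(1 : ℂ) - conj (a 0) * a 0‖ ^ 2 = (1 - A ^ 2) ^ 2 := by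
      rw [conj_mul', ← ofReal_pow, ← ofReal_one, ← ofReal_sub, norm_real, Real.norm_eq_abs, sq_abs]
    simp only [Finset.range_one, Finset.sum_singleton, if_true, pow_zero, mul_one, hu₀,
      Nat.add_eq_zero_iff, one_ne_zero, and_false, if_false, zero_sub, norm_neg, norm_mul,
      RCLike.norm_conj, mul_pow, hρ_pow] at h
    have h' := h.tsum_eq
    rw [tsum_congr fun n => mul_assoc _ _ _, tsum_mul_left] at h'
    linarith
  have hcont : ContinuousOn f (sphere 0 ρ) := hd.continuousOn.mono hsphere
  have hscale : circleAverage (fun z => r * ‖1 - conj (a 0) * f z‖ ^ 2) 0 ρ =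
      r * circleAverage (fun z => ‖1 - conj (a 0) * f z‖ ^ 2) 0 ρ := by
    simpa only [smul_eq_mul] using
      circleAverage_fun_smul (a := r) (f := fun z => ‖1 - conj (a 0) * f z‖ ^ 2) (c := 0) (R := ρ)
  rw [← hS_one_sub, ← hscale, ← hS_sub]
  refine circleAverage_mono ((hcont.sub continuousOn_const).norm.pow 2 |>.circleIntegrable hρ0)
    (continuousOn_const.mul ((continuousOn_const.sub (continuousOn_const.mul hcont)).norm.pow 2)
      |>.circleIntegrable hρ0) fun z hz => ?_
  rw [abs_of_nonneg hρ0] at hz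
  have hpick := norm_sub_apply_zero_le_mul_norm_one_sub_conj_mul hd h_maps (hsphere hz)
  rw [hf0, mem_sphere_zero_iff_norm.1 hz] at hpick
  calc ‖f z - a 0‖ ^ 2 ≤ (ρ * ‖1 - conj (a 0) * f z‖) ^ 2 := by gcongr
    _ = r * ‖1 - conj (a 0) * f z‖ ^ 2 := by rw [mul_pow, sq_sqrt hr0]

end PowerSeriesOnDisk

/-- Theorem 4: if `f` is analytic on the unit disk with `|f| ≤ 1`, then for `r ≤ 1/3`,
`|a_0| + ∑_{k=1}^∞ (|a_k| + (1/2)|a_k|^2) r^k ≤ 1`. -/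
theorem improved_bohr_squares (f : ℂ → ℂ) (a : ℕ → ℂ)
    (hf : AnalyticOn ℂ f (ball (0:ℂ) 1))
    (hsum : ∀ z ∈ ball (0:ℂ) 1, HasSum (fun k : ℕ => a k * z ^ k) (f z))
    (hbound : ∀ z ∈ ball (0:ℂ) 1, ‖f z‖ ≤ 1)
    (r : ℝ) (hr0 : 0 ≤ r) (hr : r ≤ 1/3) :
    ‖a 0‖ +
      ∑' k : ℕ, (‖a (k + 1)‖ + (1/2) * (‖a (k + 1)‖) ^ 2) * r ^ (k + 1)
      ≤ 1 := by
  have hr1 : r < 1 := by linarith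
  have h_maps : MapsTo f (ball 0 1) (closedBall 0 1) := fun z hz =>
    mem_closedBall_zero_iff.2 (hbound z hz)
  have hA : ‖a 0‖ ≤ 1 := by
    simpa [eq_of_hasSum_mul_zero_pow (hsum 0 (mem_ball_self one_pos))] using
      hbound 0 (mem_ball_self one_pos)
  set S₁ := ∑' k, ‖a (k + 1)‖ * r ^ (k + 1)
  set S₂ := ∑' k, ‖a (k + 1)‖ ^ 2 * r ^ (k + 1)
  have hS₁_sum := (summable_nat_add_iff 1).2 (summable_norm_mul_pow hsum hr0 hr1)
  have hS₂_sum := (summable_nat_add_iff 1).2 (summable_sq_norm_mul_pow hsum hr0 hr1)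
  have hS₂_nonneg : 0 ≤ S₂ := tsum_nonneg fun k => by positivity
  have hcoeff := tsum_sq_norm_coeff_succ_le hf.differentiableOn h_maps hsum hr0 hr1
  have hCS := sq_tsum_mul_pow_succ_le (fun k => norm_nonneg (a (k + 1))) hr0 hr1 hS₂_sum
  have hgeom : r / (1 - r) ≤ 1 / 2 := by rw [div_le_iff₀ (by linarith)]; linarith
  have hsplit : ∑' k, (‖a (k + 1)‖ + 1 / 2 * ‖a (k + 1)‖ ^ 2) * r ^ (k + 1) = S₁ + S₂ / 2 := by
    rw [← tsum_div_const, ← hS₁_sum.tsum_add (hS₂_sum.div_const 2)]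
    exact tsum_congr fun k => by ring
  rw [hsplit, ← add_assoc]
  refine add_add_half_le_one (norm_nonneg _) hA (tsum_nonneg fun k => by positivity) ?_ ?_
  · nlinarith [mul_nonneg (mul_nonneg hS₂_nonneg (sq_nonneg ‖a 0‖)) (by linarith : 0 ≤ 1 - 3 * r)]
  · nlinarith [mul_le_mul_of_nonneg_left hgeom hS₂_nonneg]
end

section
/- For the function f(z) = (z + a)/(1 + az) with a = √(3/11), which is analytic on the open unit disk D and satisfies |f(z)| ≤ 1 on D, and for every r with √(11/27) < r < 1, there exists z with |z| = r such that |f(z)|^2 + ∑_{k=1}^∞ |a_k|^2 r^{2k} > 1, where a_k are the Taylor coefficients of f. Hence the radius √(11/27) in the inequality |f(z)|^2 + ∑_{k=1}^∞ |a_k|^2 r^{2k} ≤ 1 cannot be improved. -/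
/-!
Take `z = r` on the positive axis. Then `f(r) = (r + a)/(1 + ar)` is real, the coefficient series
is geometric with sum `(1 - a²)² r² / (1 - a²r²)`, and the excess of the sum over `1` is a positive
multiple of `(1 - a²) r² (1 + ar)² - (1 - r²)(1 - a²r²)`. For `a² = 3/11` and `u = ar` this equals
`(3u - 1)(3 + 9u + 5u² - u³) / 3` up to a multiple of `a² - 3/11`, which is positive exactly when
`u > 1/3`, i.e. `r > √(11/27)`.
-/

theorem norm_mobius_ofReal {a r : ℝ} (ha : 0 ≤ a) (hr : 0 ≤ r) :
    ‖((r : ℂ) + a) / (1 + a * r)‖ = (r + a) / (1 + a * r) := by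
  rw [show ((r : ℂ) + a) / (1 + a * r) = ((r + a) / (1 + a * r) : ℝ) by push_cast; rfl,
    Complex.norm_real, Real.norm_of_nonneg (by positivity)]

theorem tsum_sq_mobius_coeff_mul_pow {a r : ℝ} (h : (a * r) ^ 2 < 1) :
    ∑' k : ℕ, ((1 - a ^ 2) * a ^ k) ^ 2 * r ^ (2 * (k + 1))
      = (1 - a ^ 2) ^ 2 * r ^ 2 / (1 - (a * r) ^ 2) := by
  have hterm (k : ℕ) : ((1 - a ^ 2) * a ^ k) ^ 2 * r ^ (2 * (k + 1))
      = (1 - a ^ 2) ^ 2 * r ^ 2 * ((a * r) ^ 2) ^ k := by ring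
  simp_rw [hterm]
  rw [tsum_mul_left, tsum_geometric_of_lt_one (by positivity) h, div_eq_mul_inv]

theorem one_lt_mobius_sq_add_iff {a r : ℝ} (ha : 0 ≤ a) (ha1 : a < 1) (hr : 0 ≤ r)
    (hr1 : r < 1) :
    1 < ((r + a) / (1 + a * r)) ^ 2 + (1 - a ^ 2) ^ 2 * r ^ 2 / (1 - (a * r) ^ 2) ↔
      (1 - r ^ 2) * (1 - (a * r) ^ 2) < (1 - a ^ 2) * r ^ 2 * (1 + a * r) ^ 2 := by
  have har : 0 ≤ a * r := mul_nonneg ha hr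
  have har1 : a * r < 1 := by nlinarith
  have hnum : 0 < 1 + a * r := by linarith
  have hden : 0 < 1 - (a * r) ^ 2 := by nlinarith
  have hfac : 0 < (1 - a ^ 2) / ((1 + a * r) ^ 2 * (1 - (a * r) ^ 2)) := by
    apply div_pos <;> nlinarith
  have hexcess : ((r + a) / (1 + a * r)) ^ 2 + (1 - a ^ 2) ^ 2 * r ^ 2 / (1 - (a * r) ^ 2) - 1
      = (1 - a ^ 2) / ((1 + a * r) ^ 2 * (1 - (a * r) ^ 2)) *
        ((1 - a ^ 2) * r ^ 2 * (1 + a * r) ^ 2 - (1 - r ^ 2) * (1 - (a * r) ^ 2)) := by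
    rw [div_pow, div_add_div _ _ (by positivity) hden.ne', div_sub_one (by positivity),
      div_mul_eq_mul_div, ← sub_eq_zero]
    field_simp
    ring
  rw [← sub_pos, hexcess, mul_pos_iff_of_pos_left hfac, sub_pos]

theorem one_sub_sq_mul_lt_of_sqrt_eleven_div_lt {r : ℝ} (hr1 : Real.sqrt (11/27) < r)
    (hr2 : r < 1) :
    (1 - r ^ 2) * (1 - (Real.sqrt (3/11) * r) ^ 2)
      < (1 - Real.sqrt (3/11) ^ 2) * r ^ 2 * (1 + Real.sqrt (3/11) * r) ^ 2 := by
  set a := Real.sqrt (3/11)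
  have ha2 : a ^ 2 = 3/11 := Real.sq_sqrt (by norm_num)
  have ha : 0 < a := Real.sqrt_pos.mpr (by norm_num)
  have hr : 0 < r := (Real.sqrt_nonneg _).trans_lt hr1
  have hu13 : 1/3 < a * r := by
    have : 11/27 < r ^ 2 := (Real.sqrt_lt' hr).mp hr1
    nlinarith [mul_pow a r 2]
  have hu1 : a * r < 1 := by nlinarith
  have hpoly : 0 < (3 * (a * r) - 1) * (3 + 9 * (a * r) + 5 * (a * r) ^ 2 - (a * r) ^ 3) :=
    mul_pos (by linarith) (by nlinarith)
  linear_combination (1/3) * hpoly + 22/3 * (r ^ 2 + a * r ^ 3) * ha2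

/-- Theorem 6, sharpness: for `f(z) = (z+a)/(1+az)` with `a = √(3/11)` (whose Taylor
coefficients satisfy `a_0 = a` and `|a_k| = (1-a^2) a^{k-1}` for `k ≥ 1`), for every
`r ∈ (√(11/27), 1)` there is `z` with `|z| = r` and
`|f(z)|^2 + ∑_{k=1}^∞ |a_k|^2 r^{2k} > 1`. -/
theorem improved_bohr_sq_coeff_sharp (r : ℝ)
    (hr1 : Real.sqrt (11/27) < r) (hr2 : r < 1) :
    ∃ z : ℂ, ‖z‖ = r ∧
      1 < (‖(z + (Real.sqrt (3/11) : ℂ)) / (1 + (Real.sqrt (3/11) : ℂ) * z)‖) ^ 2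
        + ∑' k : ℕ,
            ((1 - Real.sqrt (3/11) ^ 2) * Real.sqrt (3/11) ^ k) ^ 2 * r ^ (2 * (k + 1)) := by
  set a := Real.sqrt (3/11)
  have ha : 0 ≤ a := Real.sqrt_nonneg _
  have ha1 : a < 1 := (Real.sqrt_lt' one_pos).2 (by norm_num)
  have hr : 0 ≤ r := (Real.sqrt_nonneg _).trans hr1.le
  have har : (a * r) ^ 2 < 1 :=
    pow_lt_one₀ (mul_nonneg ha hr) (mul_lt_one_of_nonneg_of_lt_one_left ha ha1 hr2.le) two_ne_zero
  refine ⟨r, by simp [abs_of_nonneg hr], ?_⟩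
  rw [norm_mobius_ofReal ha hr, tsum_sq_mobius_coeff_mul_pow har,
    one_lt_mobius_sq_add_iff ha ha1 hr hr2]
  exact one_sub_sq_mul_lt_of_sqrt_eleven_div_lt hr1 hr2
end

section
/- Let f be analytic and univalent (injective) on the open unit disk D such that Ω = f(D) is a convex domain, and let g(z) = ∑_{k=0}^∞ b_k z^k be analytic on D and subordinate to f. Then for all r ≤ 1/5 and every z ∈ ℂ with |z| = r: |g(z)| + ∑_{k=1}^∞ |b_k| r^k ≤ |f(0)| + dist(f(0), ∂Ω), where dist(f(0), ∂Ω) is the Euclidean distance from f(0) to the boundary of Ω. -/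
/-!
Let `d = dist (f 0, ∂Ω)`. The boundary is nonempty: a univalent map of the disc onto `ℂ` would
have an inverse that is continuous (open mapping), holomorphic off the countable image of the
critical points, hence entire and bounded, hence constant. For a nearest boundary point `p`, the
open convex set `Ω` lies in a half-plane `Re (w v̄) < Re (p v̄)`, so Carathéodory's inequality for
`g v̄` gives `‖bₙ‖ ≤ 2 Re ((p - f 0) v̄) / ‖v‖ ≤ 2 d` for `n ≥ 1`, and summing,
`‖g z‖ + ∑_{k ≥ 1} ‖b_k‖ r^k ≤ ‖f 0‖ + 4 d r / (1 - r) ≤ ‖f 0‖ + d` for `r ≤ 1/5`.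

Carathéodory's inequality `‖aₙ‖ ≤ 2 (M - Re a₀)` for `Re φ ≤ M`: on `‖z‖ = ρ`, `-aₙ` is the
circle average of `z⁻ⁿ · 2 (M - Re φ z)`, because
`z⁻ⁿ · conj (2M - φ z) = ρ⁻²ⁿ conj (zⁿ (2M - φ z))` averages to `0`. The integrand has modulus
`ρ⁻ⁿ · 2 (M - Re φ z)`, whose average is `ρ⁻ⁿ · 2 (M - Re a₀)` by the mean value property.
-/

open Metric Set Filter Complex Real
open scoped Topology ComplexConjugate

theorem hasFPowerSeriesOnBall_ofScalars_of_hasSum {φ : ℂ → ℂ} {a : ℕ → ℂ}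
    (hsum : ∀ z ∈ ball (0:ℂ) 1, HasSum (fun k => a k * z ^ k) (φ z)) :
    HasFPowerSeriesOnBall φ (FormalMultilinearSeries.ofScalars ℂ a) 0 1 where
  r_le := by
    refine ENNReal.le_of_forall_nnreal_lt fun r hr => ?_
    have hr' : (r : ℂ) ∈ ball (0:ℂ) 1 := by
      simpa using (ENNReal.coe_lt_one_iff.mp hr)
    refine FormalMultilinearSeries.le_radius_of_tendsto _ (l := 0) ?_
    simpa [FormalMultilinearSeries.ofScalars_norm] using
      (hsum _ hr').summable.tendsto_atTop_zero.norm
  r_pos := one_pos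
  hasSum {y} hy := by
    simpa [FormalMultilinearSeries.ofScalars_apply_eq, mul_comm] using
      hsum y (by simpa [← ofReal_norm, enorm_eq_nnnorm] using hy)

theorem HasFPowerSeriesOnBall.coeff_zero_ofScalars {φ : ℂ → ℂ} {a : ℕ → ℂ} {x : ℂ}
    {r : ENNReal} (hp : HasFPowerSeriesOnBall φ (FormalMultilinearSeries.ofScalars ℂ a) x r) :
    a 0 = φ x := by
  simpa using hp.coeff_zero (fun _ => 1)

theorem HasFPowerSeriesOnBall.differentiableOn_closedBall {φ : ℂ → ℂ}
    {p : FormalMultilinearSeries ℂ ℂ ℂ} (hp : HasFPowerSeriesOnBall φ p 0 1) {ρ : ℝ}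
    (hρ1 : ρ < 1) : DifferentiableOn ℂ φ (closedBall 0 ρ) :=
  hp.differentiableOn.mono fun z hz => by
    simpa [← ofReal_norm, enorm_eq_nnnorm] using (mem_closedBall_zero_iff.mp hz).trans_lt hρ1

theorem norm_circleAverage_le {E : Type*} [NormedAddCommGroup E] [NormedSpace ℝ E]
    (f : ℂ → E) (c : ℂ) (R : ℝ) :
    ‖circleAverage f c R‖ ≤ circleAverage (fun z => ‖f z‖) c R := by
  simp only [circleAverage_def, norm_smul, smul_eq_mul, norm_inv, Real.norm_eq_abs,
    abs_of_pos two_pi_pos]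
  gcongr
  exact intervalIntegral.norm_integral_le_integral_norm two_pi_pos.le

theorem DifferentiableOn.circleAverage_re {ψ : ℂ → ℂ} {c : ℂ} {R : ℝ}
    (hψ : DifferentiableOn ℂ ψ (closedBall c |R|)) :
    circleAverage (fun z => (ψ z).re) c R = (ψ c).re := by
  rw [← (hψ.mono closure_ball_subset_closedBall).diffContOnCl.circleAverage]
  exact reCLM.circleAverage_comp_comm
    (hψ.continuousOn.mono sphere_subset_closedBall).circleIntegrable'

theorem HasFPowerSeriesOnBall.circleAverage_inv_pow_mul_eq_coeff {φ : ℂ → ℂ} {a : ℕ → ℂ}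
    (hp : HasFPowerSeriesOnBall φ (FormalMultilinearSeries.ofScalars ℂ a) 0 1)
    {ρ : ℝ} (hρ0 : 0 < ρ) (hρ1 : ρ < 1) (n : ℕ) :
    circleAverage (fun z => z⁻¹ ^ n * φ z) 0 ρ = a n := by
  have hc := (hp.differentiableOn_closedBall hρ1).hasFPowerSeriesOnBall (R := ⟨ρ, hρ0.le⟩) hρ0
  have heq : FormalMultilinearSeries.ofScalars ℂ a = cauchyPowerSeries φ 0 ρ :=
    hp.hasFPowerSeriesAt.eq_formalMultilinearSeries hc.hasFPowerSeriesAt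
  calc circleAverage (fun z => z⁻¹ ^ n * φ z) 0 ρ
      = cauchyPowerSeries φ 0 ρ n (fun _ => 1) := by
        rw [cauchyPowerSeries_apply, circleAverage_eq_circleIntegral hρ0.ne']
        simp only [smul_eq_mul, sub_zero, div_eq_mul_inv, one_mul, inv_pow, mul_left_comm]
    _ = a n := by simp [← heq]

theorem DifferentiableOn.circleAverage_inv_pow_mul_conj_eq_zero {ψ : ℂ → ℂ} {ρ : ℝ}
    (hψ : DifferentiableOn ℂ ψ (closedBall 0 |ρ|)) {n : ℕ} (hn : n ≠ 0) :
    circleAverage (fun z => z⁻¹ ^ n * conj (ψ z)) 0 ρ = 0 := by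
  have hint : CircleIntegrable (fun z => z ^ n * ψ z) 0 ρ :=
    ((continuousOn_pow n).mul hψ.continuousOn |>.mono sphere_subset_closedBall).circleIntegrable'
  calc circleAverage (fun z => z⁻¹ ^ n * conj (ψ z)) 0 ρ
      = circleAverage (fun z => ((ρ ^ 2)⁻¹ ^ n : ℝ) • conj (z ^ n * ψ z)) 0 ρ := by
        refine circleAverage_congr_sphere fun z hz => ?_
        rw [mem_sphere_zero_iff_norm] at hz
        rw [Complex.inv_def, normSq_eq_norm_sq, hz, sq_abs]
        simp [mul_pow]
        ring
    _ = ((ρ ^ 2)⁻¹ ^ n : ℝ) • conj (circleAverage (fun z => z ^ n * ψ z) 0 ρ) := by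
        rw [circleAverage_fun_smul]
        congr 1
        exact conjCLE.toContinuousLinearMap.circleAverage_comp_comm hint
    _ = 0 := by
        have hmean : circleAverage (fun z => z ^ n * ψ z) 0 ρ = 0 ^ n * ψ 0 :=
          ((differentiableOn_pow n).mul hψ |>.mono
            closure_ball_subset_closedBall).diffContOnCl.circleAverage
        simp [hmean, hn]

theorem HasFPowerSeriesOnBall.circleAverage_inv_pow_mul_re_eq {φ : ℂ → ℂ} {a : ℕ → ℂ}
    (hp : HasFPowerSeriesOnBall φ (FormalMultilinearSeries.ofScalars ℂ a) 0 1) (M : ℝ)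
    {ρ : ℝ} (hρ0 : 0 < ρ) (hρ1 : ρ < 1) {n : ℕ} (hn : n ≠ 0) :
    circleAverage (fun z => z⁻¹ ^ n * ((2 * (M - (φ z).re) : ℝ) : ℂ)) 0 ρ = -a n := by
  have hd : DifferentiableOn ℂ φ (closedBall 0 |ρ|) := by
    rw [abs_of_pos hρ0]
    exact hp.differentiableOn_closedBall hρ1
  have hψ : DifferentiableOn ℂ (fun z => 2 * M - φ z) (closedBall 0 |ρ|) :=
    (differentiableOn_const _).sub hd
  have hφ : ContinuousOn φ (sphere 0 |ρ|) := hd.continuousOn.mono sphere_subset_closedBall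
  have hinv : ContinuousOn (fun z : ℂ => z⁻¹ ^ n) (sphere 0 |ρ|) :=
    (continuousOn_inv₀.mono fun z hz h => by
      rw [mem_sphere_zero_iff_norm, h, norm_zero, abs_of_pos hρ0] at hz
      exact hρ0.ne hz).pow n
  have hint₁ : CircleIntegrable (fun z => z⁻¹ ^ n * conj (2 * M - φ z)) 0 ρ :=
    (hinv.mul (continuous_conj.comp_continuousOn
      (hψ.continuousOn.mono sphere_subset_closedBall))).circleIntegrable'
  have hint₂ : CircleIntegrable (fun z => z⁻¹ ^ n * φ z) 0 ρ := (hinv.mul hφ).circleIntegrable'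
  calc circleAverage (fun z => z⁻¹ ^ n * ((2 * (M - (φ z).re) : ℝ) : ℂ)) 0 ρ
      = circleAverage (fun z => z⁻¹ ^ n * conj (2 * M - φ z)) 0 ρ
        - circleAverage (fun z => z⁻¹ ^ n * φ z) 0 ρ := by
        rw [← circleAverage_fun_sub hint₁ hint₂]
        congr 1 with z
        rw [← mul_sub]
        congr 1
        apply Complex.ext <;> simp
        ring
    _ = -a n := by
        rw [hψ.circleAverage_inv_pow_mul_conj_eq_zero hn,
          hp.circleAverage_inv_pow_mul_eq_coeff hρ0 hρ1, zero_sub]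

theorem HasFPowerSeriesOnBall.norm_coeff_mul_pow_le_two_mul_sub_re {φ : ℂ → ℂ} {a : ℕ → ℂ}
    (hp : HasFPowerSeriesOnBall φ (FormalMultilinearSeries.ofScalars ℂ a) 0 1) {M : ℝ}
    (hM : ∀ z ∈ ball (0:ℂ) 1, (φ z).re ≤ M) {ρ : ℝ} (hρ0 : 0 < ρ) (hρ1 : ρ < 1)
    {n : ℕ} (hn : n ≠ 0) :
    ‖a n‖ * ρ ^ n ≤ 2 * (M - (a 0).re) := by
  set G : ℂ → ℝ := fun z => 2 * (M - (φ z).re)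
  have hG : circleAverage G 0 ρ = 2 * (M - (a 0).re) := by
    have hd : DifferentiableOn ℂ φ (closedBall 0 |ρ|) := by
      rw [abs_of_pos hρ0]
      exact hp.differentiableOn_closedBall hρ1
    have hψ : DifferentiableOn ℂ (fun z => 2 * (M - φ z)) (closedBall 0 |ρ|) :=
      (differentiableOn_const _).mul ((differentiableOn_const _).sub hd)
    simpa [G, hp.coeff_zero_ofScalars] using hψ.circleAverage_re
  have hnorm : EqOn (fun z => ‖z⁻¹ ^ n * (G z : ℂ)‖) (fun z => (ρ ^ n)⁻¹ • G z)
      (sphere 0 |ρ|) := fun z hz => by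
    rw [mem_sphere_zero_iff_norm, abs_of_pos hρ0] at hz
    have hG0 : 0 ≤ G z := by linarith [hM z (by rwa [mem_ball_zero_iff, hz])]
    simp [hz, abs_of_nonneg hG0]
  calc ‖a n‖ * ρ ^ n
      = ‖circleAverage (fun z => z⁻¹ ^ n * (G z : ℂ)) 0 ρ‖ * ρ ^ n := by
        rw [hp.circleAverage_inv_pow_mul_re_eq M hρ0 hρ1 hn, norm_neg]
    _ ≤ circleAverage (fun z => ‖z⁻¹ ^ n * (G z : ℂ)‖) 0 ρ * ρ ^ n := by
        gcongr
        exact norm_circleAverage_le _ _ _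
    _ = circleAverage G 0 ρ := by
        rw [circleAverage_congr_sphere hnorm, circleAverage_fun_smul, smul_eq_mul]
        field_simp
    _ = 2 * (M - (a 0).re) := hG

theorem norm_coeff_le_two_mul_sub_re {φ : ℂ → ℂ} {a : ℕ → ℂ}
    (hsum : ∀ z ∈ ball (0:ℂ) 1, HasSum (fun k => a k * z ^ k) (φ z)) {M : ℝ}
    (hM : ∀ z ∈ ball (0:ℂ) 1, (φ z).re ≤ M) {n : ℕ} (hn : n ≠ 0) :
    ‖a n‖ ≤ 2 * (M - (a 0).re) := by
  have hp := hasFPowerSeriesOnBall_ofScalars_of_hasSum hsum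
  have hlim : Tendsto (fun ρ : ℝ => ‖a n‖ * ρ ^ n) (𝓝[<] 1) (𝓝 ‖a n‖) :=
    ((by fun_prop : Continuous fun ρ : ℝ => ‖a n‖ * ρ ^ n).tendsto' 1 _ (by simp)).mono_left
      nhdsWithin_le_nhds
  refine le_of_tendsto hlim ?_
  filter_upwards [Ioo_mem_nhdsLT one_pos] with ρ hρ
  exact hp.norm_coeff_mul_pow_le_two_mul_sub_re hM hρ.1 hρ.2 hn

theorem differentiable_of_continuous_of_differentiableAt_off_countable
    {E : Type*} [NormedAddCommGroup E] [NormedSpace ℂ E] [CompleteSpace E] {h : ℂ → E}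
    (hc : Continuous h) {s : Set ℂ} (hs : s.Countable) (hd : ∀ w ∉ s, DifferentiableAt ℂ h w) :
    Differentiable ℂ h := fun w =>
  (Complex.hasFPowerSeriesOnBall_of_differentiable_off_countable (c := w) (R := 1) hs
    hc.continuousOn (fun z hz => hd z hz.2) one_pos).analyticAt.differentiableAt

theorem AnalyticOnNhd.countable_preimage_zero_inter {F : ℂ → ℂ} {U : Set ℂ}
    (hF : AnalyticOnNhd ℂ F U) (hU : IsPreconnected U) (hF0 : ¬EqOn F 0 U) :
    (F ⁻¹' {0} ∩ U).Countable :=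
  (HereditarilyLindelofSpace.isLindelof _).countable_of_isDiscrete <|
    isDiscrete_of_codiscreteWithin <|
      (hF.eqOn_zero_or_eventually_ne_zero_of_preconnected hU).resolve_left hF0

theorem AnalyticOnNhd.isOpen_image_of_injOn {f : ℂ → ℂ} {U : Set ℂ} (hf : AnalyticOnNhd ℂ f U)
    (hU : IsPreconnected U) (hinj : InjOn f U) {s : Set ℂ} (hsU : s ⊆ U) (hs : IsOpen s) :
    IsOpen (f '' s) := by
  rcases hf.is_constant_or_isOpen hU with ⟨w, hw⟩ | hopen
  · have hsub : s.Subsingleton := fun x hx y hy =>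
      hinj (hsU hx) (hsU hy) ((hw x (hsU hx)).trans (hw y (hsU hy)).symm)
    rcases hsub.eq_empty_or_singleton with rfl | ⟨x, rfl⟩
    · simp
    · exact absurd hs (not_isOpen_singleton x)
  · exact hopen s hsU hs

theorem AnalyticOnNhd.image_ne_univ_of_injOn {f : ℂ → ℂ} {U : Set ℂ} (hf : AnalyticOnNhd ℂ f U)
    (hUo : IsOpen U) (hU : IsPreconnected U) (hUb : Bornology.IsBounded U) (hinj : InjOn f U) :
    f '' U ≠ univ := by
  intro hsurj
  choose h hhU hfh using fun w => (hsurj ▸ mem_univ w : w ∈ f '' U)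
  have hhf : ∀ z ∈ U, h (f z) = z := fun z hz => hinj (hhU _) hz (hfh _)
  have hcont : Continuous h := continuous_def.mpr fun V hV => by
    convert hf.isOpen_image_of_injOn hU hinj inter_subset_right (hV.inter hUo) using 1
    ext w
    exact ⟨fun hw => ⟨h w, ⟨hw, hhU w⟩, hfh w⟩, by rintro ⟨z, ⟨hzV, hzU⟩, rfl⟩; simpa [hhf z hzU]⟩
  have hderiv : ¬EqOn (deriv f) 0 U := fun h0 => zero_ne_one <| by
    rw [← hfh 0, ← hfh 1]
    exact hUo.is_const_of_deriv_eq_zero hU hf.differentiableOn h0 (hhU 0) (hhU 1)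
  have hdiff : ∀ w ∉ f '' (deriv f ⁻¹' {0} ∩ U), DifferentiableAt ℂ h w := fun w hw => by
    have hne : deriv f (h w) ≠ 0 := fun h0 => hw ⟨h w, ⟨h0, hhU w⟩, hfh w⟩
    have hinv := (hf _ (hhU w)).hasStrictDerivAt.to_local_left_inverse hne
      (Filter.eventually_of_mem (hUo.mem_nhds (hhU w)) hhf)
    rw [hfh] at hinv
    exact hinv.hasDerivAt.differentiableAt
  have hent := differentiable_of_continuous_of_differentiableAt_off_countable hcont
    ((hf.deriv.countable_preimage_zero_inter hU hderiv).image f) hdiff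
  refine zero_ne_one (α := ℂ) ?_
  rw [← hfh 0, ← hfh 1,
    hent.apply_eq_apply_of_bounded (hUb.subset (range_subset_iff.mpr hhU)) 0 1]

theorem Convex.exists_re_mul_conj_lt {S : Set ℂ} (hS : Convex ℝ S) (hSo : IsOpen S) {p : ℂ}
    (hp : p ∉ S) : ∃ v : ℂ, ∀ w ∈ S, (w * conj v).re < (p * conj v).re := by
  obtain ⟨l, hl⟩ := geometric_hahn_banach_open_point hS hSo hp
  refine ⟨(InnerProductSpace.toDual ℝ ℂ).symm l, fun w hw => ?_⟩
  simpa only [← Complex.inner, InnerProductSpace.toDual_symm_apply] using hl w hw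

theorem norm_coeff_le_two_mul_infDist_frontier {S : Set ℂ} (hS : Convex ℝ S) (hSo : IsOpen S)
    (hSu : S ≠ univ) {g : ℂ → ℂ} {b : ℕ → ℂ}
    (hsum : ∀ z ∈ ball (0:ℂ) 1, HasSum (fun k => b k * z ^ k) (g z))
    (hgS : MapsTo g (ball 0 1) S) {n : ℕ} (hn : n ≠ 0) :
    ‖b n‖ ≤ 2 * infDist (b 0) (frontier S) := by
  have hb0 : b 0 ∈ S := (hasFPowerSeriesOnBall_ofScalars_of_hasSum hsum).coeff_zero_ofScalars ▸
    hgS (mem_ball_self one_pos)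
  obtain ⟨p, hp, hdist⟩ := isClosed_frontier.exists_infDist_eq_dist
    (nonempty_frontier_iff.mpr ⟨⟨_, hb0⟩, hSu⟩) (b 0)
  obtain ⟨v, hv⟩ := hS.exists_re_mul_conj_lt hSo (hSo.frontier_eq ▸ hp).2
  have hv0 : 0 < ‖v‖ := norm_pos_iff.mpr fun h0 => by simpa [h0] using hv _ hb0
  have hcar : ‖b n * conj v‖ ≤ 2 * ((p * conj v).re - (b 0 * conj v).re) :=
    norm_coeff_le_two_mul_sub_re (φ := fun z => g z * conj v) (a := fun k => b k * conj v)
      (fun z hz => by simpa only [mul_right_comm] using (hsum z hz).mul_right (conj v))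
      (fun z hz => (hv _ (hgS hz)).le) hn
  have hre : ((p - b 0) * conj v).re ≤ infDist (b 0) (frontier S) * ‖v‖ := by
    calc ((p - b 0) * conj v).re ≤ ‖(p - b 0) * conj v‖ := re_le_norm _
      _ = infDist (b 0) (frontier S) * ‖v‖ := by
        rw [norm_mul, RCLike.norm_conj, hdist, dist_comm, dist_eq_norm]
  rw [norm_mul, RCLike.norm_conj, ← sub_re, ← sub_mul] at hcar
  exact le_of_mul_le_mul_right (by linarith) hv0

theorem hasSum_mul_pow_succ (C : ℝ) {r : ℝ} (hr0 : 0 ≤ r) (hr1 : r < 1) :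
    HasSum (fun k => C * r ^ (k + 1)) (C * (r / (1 - r))) := by
  simpa [pow_succ', mul_assoc, div_eq_mul_inv] using
    (hasSum_geometric_of_lt_one hr0 hr1).mul_left (C * r)

theorem summable_mul_pow_succ_of_le {c : ℕ → ℝ} {C r : ℝ} (hc0 : ∀ n, 0 ≤ c n)
    (hc : ∀ n, c n ≤ C) (hr0 : 0 ≤ r) (hr1 : r < 1) :
    Summable fun k => c k * r ^ (k + 1) :=
  (hasSum_mul_pow_succ C hr0 hr1).summable.of_nonneg_of_le
    (fun k => mul_nonneg (hc0 k) (by positivity))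
    fun k => by gcongr; exact hc k

theorem tsum_mul_pow_succ_le {c : ℕ → ℝ} {C r : ℝ} (hc0 : ∀ n, 0 ≤ c n)
    (hc : ∀ n, c n ≤ C) (hr0 : 0 ≤ r) (hr1 : r < 1) :
    ∑' k, c k * r ^ (k + 1) ≤ C * (r / (1 - r)) :=
  hasSum_le (fun k => by gcongr; exact hc k)
    (summable_mul_pow_succ_of_le hc0 hc hr0 hr1).hasSum (hasSum_mul_pow_succ C hr0 hr1)

theorem norm_le_norm_coeff_zero_add_tsum {a : ℕ → ℂ} {z w : ℂ}
    (hsum : HasSum (fun k => a k * z ^ k) w)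
    (htail : Summable fun k => ‖a (k + 1)‖ * ‖z‖ ^ (k + 1)) :
    ‖w‖ ≤ ‖a 0‖ + ∑' k, ‖a (k + 1)‖ * ‖z‖ ^ (k + 1) := by
  have hnorm : HasSum (fun k => ‖a k‖ * ‖z‖ ^ k) (‖a 0‖ + ∑' k, ‖a (k + 1)‖ * ‖z‖ ^ (k + 1)) := by
    rw [← hasSum_nat_add_iff' 1]
    simpa using htail.hasSum
  exact hsum.norm_le_of_bounded hnorm fun k => by rw [norm_mul, norm_pow]

theorem norm_add_tsum_norm_coeff_mul_pow_le {b : ℕ → ℂ} {z w : ℂ}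
    (hsum : HasSum (fun k => b k * z ^ k) w) {d : ℝ} (hb : ∀ k, ‖b (k + 1)‖ ≤ 2 * d)
    (hz : ‖z‖ ≤ 1 / 5) :
    ‖w‖ + ∑' k, ‖b (k + 1)‖ * ‖z‖ ^ (k + 1) ≤ ‖b 0‖ + d := by
  have hz1 : ‖z‖ < 1 := by linarith
  have hw := norm_le_norm_coeff_zero_add_tsum hsum
    (summable_mul_pow_succ_of_le (fun _ => norm_nonneg _) hb (norm_nonneg z) hz1)
  have htail := tsum_mul_pow_succ_le (fun _ => norm_nonneg _) hb (norm_nonneg z) hz1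
  have hq : ‖z‖ / (1 - ‖z‖) ≤ 1 / 4 := by
    rw [div_le_div_iff₀ (by linarith) (by norm_num)]
    linarith
  have hd : 0 ≤ d := by linarith [norm_nonneg (b 1), hb 0]
  nlinarith

theorem bohr_rogosinski_subordination_convex_general (f g : ℂ → ℂ) (b : ℕ → ℂ)
    (hf : AnalyticOn ℂ f (ball (0:ℂ) 1))
    (hinj : Set.InjOn f (ball (0:ℂ) 1))
    (hconv : Convex ℝ (f '' ball (0:ℂ) 1))
    (hsub : ∃ ω : ℂ → ℂ, AnalyticOn ℂ ω (ball (0:ℂ) 1) ∧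
      Set.MapsTo ω (ball (0:ℂ) 1) (ball (0:ℂ) 1) ∧ ω 0 = 0 ∧
      ∀ z ∈ ball (0:ℂ) 1, g z = f (ω z))
    (hsum : ∀ z ∈ ball (0:ℂ) 1, HasSum (fun k : ℕ => b k * z ^ k) (g z))
    (r : ℝ) (hr : r ≤ 1/5)
    (z : ℂ) (hz : ‖z‖ = r) :
    ‖g z‖ + ∑' k : ℕ, ‖b (k + 1)‖ * r ^ (k + 1) ≤
      ‖f 0‖ + infDist (f 0) (frontier (f '' ball (0:ℂ) 1)) := by
  obtain ⟨ω, -, hω, hω0, hgf⟩ := hsub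
  have hfN : AnalyticOnNhd ℂ f (ball 0 1) := isOpen_ball.analyticOn_iff_analyticOnNhd.mp hf
  have hb0 : b 0 = f 0 := by
    rw [(hasFPowerSeriesOnBall_ofScalars_of_hasSum hsum).coeff_zero_ofScalars,
      hgf 0 (mem_ball_self one_pos), hω0]
  have hcoeff (k : ℕ) : ‖b (k + 1)‖ ≤ 2 * infDist (b 0) (frontier (f '' ball (0:ℂ) 1)) :=
    norm_coeff_le_two_mul_infDist_frontier hconv
      (hfN.isOpen_image_of_injOn (convex_ball 0 1).isPreconnected hinj subset_rfl isOpen_ball)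
      (hfN.image_ne_univ_of_injOn isOpen_ball (convex_ball 0 1).isPreconnected isBounded_ball
        hinj) hsum (fun ζ hζ => hgf ζ hζ ▸ mem_image_of_mem f (hω hζ)) k.succ_ne_zero
  rw [hb0] at hcoeff
  have hz1 : z ∈ ball (0:ℂ) 1 := by rw [mem_ball_zero_iff]; linarith
  simpa [hz, hb0] using norm_add_tsum_norm_coeff_mul_pow_le (hsum z hz1) hcoeff (by linarith)

/-- Theorem 8: if `f` is analytic and univalent on the unit disk with convex image
`Ω = f(𝔻)`, and `g` is analytic on `𝔻` and subordinate to `f`, then for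
`|z| = r ≤ 1/5`, `|g(z)| + ∑_{k=1}^∞ |b_k| r^k ≤ |f(0)| + dist(f(0), ∂Ω)`. -/
theorem bohr_rogosinski_subordination_convex (f g : ℂ → ℂ) (b : ℕ → ℂ)
    (hf : AnalyticOn ℂ f (ball (0:ℂ) 1))
    (hinj : Set.InjOn f (ball (0:ℂ) 1))
    (hconv : Convex ℝ (f '' ball (0:ℂ) 1))
    (hg : AnalyticOn ℂ g (ball (0:ℂ) 1))
    (hsub : ∃ ω : ℂ → ℂ, AnalyticOn ℂ ω (ball (0:ℂ) 1) ∧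
      Set.MapsTo ω (ball (0:ℂ) 1) (ball (0:ℂ) 1) ∧ ω 0 = 0 ∧
      ∀ z ∈ ball (0:ℂ) 1, g z = f (ω z))
    (hsum : ∀ z ∈ ball (0:ℂ) 1, HasSum (fun k : ℕ => b k * z ^ k) (g z))
    (r : ℝ) (hr : r ≤ 1/5)
    (z : ℂ) (hz : ‖z‖ = r) :
    ‖g z‖ + ∑' k : ℕ, ‖b (k + 1)‖ * r ^ (k + 1) ≤
      ‖f 0‖ + infDist (f 0) (frontier (f '' ball (0:ℂ) 1)) :=
  bohr_rogosinski_subordination_convex_general f g b hf hinj hconv hsub hsum r hr z hz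
end
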